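/- arXiv:1404.3112 — 9 statements merged into one kernel-verified Lean document; each statement's English description precedes it below -/
import Mathlib

section
/- Let q₀ be a real number, viewed as a quaternion, let 0 < r, and let a : ℕ → ℍ be a sequence of quaternions such that for some r' > r the series ∑ ‖a n‖ · r'ⁿ is summable (so the power series f(q) = ∑' n, (q − q₀)ⁿ · a n converges absolutely for all ‖q − q₀‖ ≤ r). Let A be a real number such that |Re f(q)| ≤ A for every q ∈ ℍ with ‖q − q₀‖ = r. Then for every ρ with 0 < ρ < r and every q ∈ ℍ with ‖q − q₀‖ ≤ ρ one has ‖f(q)‖ ≤ ‖Im (a 0)‖ + |Re (a 0)| · (r + ρ)/(r − ρ) + 2A · ρ/(r − ρ). (Note f(q₀) = a 0, so Re(a 0) and ‖Im(a 0)‖ are the β and |γ| of the classical statement.) -/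
local notation "ℍ" => Quaternion ℝ

/-!
Fix a unit imaginary quaternion `J`. Since `x + iy ↦ x + yJ` embeds `ℂ` into `ℍ` as an
`ℝ`-algebra, on the circle `{r (cos θ + J sin θ)}` the real part of `∑ qᵏ aₖ` is the real part of
the complex power series `∑ zᵏ bₖ` with `bₖ = Re aₖ - i Re (J aₖ)`. Integrating against `e^{-inθ}`
recovers `π rⁿ bₙ` for `n ≥ 1`, so `|Re f| ≤ A` on the sphere forces `|bₙ| rⁿ ≤ 2A`; choosing `J`
along `Im aₙ` makes `|bₙ| = ‖aₙ‖`. Summing the resulting geometric majorant gives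
`‖f q‖ ≤ ‖a₀‖ + 2Aρ/(r - ρ)`, which is stronger than the claim since `(r + ρ)/(r - ρ) ≥ 1`.
-/

open Complex intervalIntegral
open scoped Real ComplexConjugate

theorem integral_exp_int_mul_mul_I (m : ℤ) :
    ∫ θ in (0 : ℝ)..2 * π, cexp (m * θ * I) = if m = 0 then 2 * π else 0 := by
  split_ifs with hm
  · simp [hm]
  have hmI : (m : ℂ) * I ≠ 0 := mul_ne_zero (Int.cast_ne_zero.2 hm) I_ne_zero
  simp_rw [mul_right_comm _ _ I]
  rw [integral_exp_mul_complex hmI]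
  push_cast
  rw [show (m : ℂ) * I * (2 * π) = m * (2 * π * I) by ring, exp_int_mul_two_pi_mul_I]
  simp

theorem integral_re_tsum_mul_exp_neg {c : ℕ → ℂ} (hc : Summable fun k => ‖c k‖) {n : ℕ}
    (hn : n ≠ 0) :
    ∫ θ in (0 : ℝ)..2 * π, ((∑' k, c k * cexp (k * θ * I)).re : ℂ) * cexp (-(n * θ * I)) =
      π * c n := by
  set F : ℕ → ℝ → ℂ := fun k θ => ((c k * cexp (k * θ * I)).re : ℂ) * cexp (-(n * θ * I))
  have hnorm : ∀ k (θ : ℝ), ‖c k * cexp (k * θ * I)‖ = ‖c k‖ := fun k θ => by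
    simp [norm_exp]
  have hsum : ∀ θ : ℝ, HasSum (fun k => F k θ)
      (((∑' k, c k * cexp (k * θ * I)).re : ℂ) * cexp (-(n * θ * I))) := fun θ =>
    have hθ : Summable fun k => c k * cexp (k * θ * I) := .of_norm (by simpa only [hnorm] using hc)
    (hasSum_ofReal.2 (hasSum_re hθ.hasSum)).mul_right _
  -- `Re w = (w + conj w) / 2` splits each term into the frequencies `k - n` and `-k - n`
  have hF : ∀ k, ∫ θ in (0 : ℝ)..2 * π, F k θ = if k = n then π * c n else 0 := fun k => by
    have hsplit : ∀ θ : ℝ, F k θ = (c k * cexp (((k - n : ℤ) : ℂ) * θ * I)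
        + conj (c k) * cexp (((-k - n : ℤ) : ℂ) * θ * I)) / 2 := fun θ => by
      simp only [F, re_eq_add_conj, map_mul, ← exp_conj, conj_ofReal, map_natCast, conj_I]
      rw [div_mul_eq_mul_div, add_mul]
      simp only [mul_assoc, ← exp_add]
      push_cast
      ring_nf
    have hint : ∀ m : ℤ, IntervalIntegrable (fun θ : ℝ => cexp (m * θ * I))
        MeasureTheory.volume 0 (2 * π) :=
      fun m => (by fun_prop : Continuous fun θ : ℝ => cexp (m * θ * I)).intervalIntegrable _ _
    simp_rw [hsplit]
    rw [integral_div, integral_add ((hint _).const_mul _) ((hint _).const_mul _),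
      integral_const_mul, integral_const_mul, integral_exp_int_mul_mul_I,
      integral_exp_int_mul_mul_I, if_neg (by omega : (-k - n : ℤ) ≠ 0)]
    by_cases hkn : k = n
    · subst hkn
      simp only [sub_self, ↓reduceIte, ofReal_mul, ofReal_ofNat, ofReal_zero, mul_zero, add_zero]
      ring
    · simp [hkn, sub_eq_zero]
  refine (hasSum_integral_of_dominated_convergence (fun k _ => ‖c k‖) (fun k => ?_)
    (fun k => ?_) (.of_forall fun _ _ => hc) intervalIntegrable_const
    (.of_forall fun θ _ => hsum θ)).unique ?_
  · exact (by fun_prop : Continuous (F k)).aestronglyMeasurable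
  · refine .of_forall fun θ _ => ?_
    simp only [F, norm_mul, norm_real, Real.norm_eq_abs, norm_exp]
    rw [show (-(n * θ * I) : ℂ).re = 0 by simp, Real.exp_zero, mul_one, ← hnorm k θ]
    exact abs_re_le_norm _
  · simp_rw [hF]
    exact hasSum_ite_eq n _

theorem Complex.norm_coeff_mul_pow_le_of_abs_re_le {b : ℕ → ℂ} {r A : ℝ} (hr : 0 ≤ r)
    (hb : Summable fun k => ‖b k‖ * r ^ k)
    (hA : ∀ z : ℂ, ‖z‖ = r → |(∑' k, z ^ k * b k).re| ≤ A) {n : ℕ} (hn : n ≠ 0) :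
    ‖b n‖ * r ^ n ≤ 2 * A := by
  set c : ℕ → ℂ := fun k => r ^ k * b k
  have hc : Summable fun k => ‖c k‖ := by
    simpa [c, norm_mul, abs_of_nonneg hr, mul_comm] using hb
  have hcircle : ∀ θ : ℝ, ∑' k, (r * cexp (θ * I)) ^ k * b k = ∑' k, c k * cexp (k * θ * I) :=
    fun θ => tsum_congr fun k => by
      rw [mul_pow, ← exp_nat_mul, ← mul_assoc]
      ring
  have hbound : ∀ θ : ℝ, ‖((∑' k, c k * cexp (k * θ * I)).re : ℂ) * cexp (-(n * θ * I))‖ ≤ A :=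
    fun θ => by
      rw [norm_mul, norm_real, Real.norm_eq_abs, ← hcircle, norm_exp,
        show (-(n * θ * I) : ℂ).re = 0 by simp, Real.exp_zero, mul_one]
      exact hA _ (by simp [norm_exp, abs_of_nonneg hr])
  have := norm_integral_le_of_norm_le_const (a := 0) (b := 2 * π) fun θ _ => hbound θ
  rw [integral_re_tsum_mul_exp_neg hc hn] at this
  simp only [c, norm_mul, norm_real, norm_pow, Real.norm_eq_abs, abs_of_nonneg hr,
    abs_of_pos Real.pi_pos, abs_of_pos Real.two_pi_pos, sub_zero] at this
  nlinarith [Real.pi_pos]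

theorem Quaternion.re_tsum {ι : Type*} {f : ι → ℍ} (hf : Summable f) :
    (∑' k, f k).re = ∑' k, (f k).re :=
  hf.map_tsum (QuaternionAlgebra.reₗ _ _ _) continuous_re

theorem Quaternion.sq_norm_eq_re_sq_add_sq_norm_im (a : ℍ) : ‖a‖ ^ 2 = a.re ^ 2 + ‖a.im‖ ^ 2 := by
  simp only [sq, ← normSq_eq_norm_mul_self, normSq_def', re_im, imI_im, imJ_im, imK_im]
  ring

theorem Quaternion.abs_re_le_norm (a : ℍ) : |a.re| ≤ ‖a‖ :=
  sq_le_sq.1 ((le_add_of_nonneg_right (sq_nonneg ‖a.im‖)).trans_eq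
    (sq_norm_eq_re_sq_add_sq_norm_im a).symm) |>.trans_eq (abs_norm a)

theorem Quaternion.norm_le_abs_re_add_norm_im (a : ℍ) : ‖a‖ ≤ |a.re| + ‖a.im‖ := by
  calc ‖a‖ = ‖(a.re : ℍ) + a.im‖ := by rw [re_add_im]
    _ ≤ |a.re| + ‖a.im‖ := by
      simpa only [norm_coe, Real.norm_eq_abs] using norm_add_le (a.re : ℍ) a.im

section Slice

variable {J : ℍ}

theorem Quaternion.mul_self_eq_neg_one (hre : J.re = 0) (hnorm : ‖J‖ = 1) : J * J = -1 := by
  rw [← sq, sq_eq_neg_normSq.2 hre, normSq_eq_norm_mul_self, hnorm, mul_one, coe_one]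

noncomputable def Quaternion.sliceCoeff (J a : ℍ) : ℂ := ⟨a.re, -(J * a).re⟩

theorem Quaternion.re_lift_mul (hJ : J * J = -1) (w : ℂ) (a : ℍ) :
    (Complex.lift ⟨J, hJ⟩ w * a).re = (w * sliceCoeff J a).re := by
  simp only [lift_apply, liftAux_apply, algebraMap_def, re_mul, re_add, re_coe, re_smul,
    smul_eq_mul, imI_add, imI_coe, imI_smul, zero_add, imJ_add, imJ_coe, imJ_smul, imK_add, imK_coe,
    imK_smul, sliceCoeff, mul_re]
  ring

theorem Quaternion.norm_lift (hre : J.re = 0) (hnorm : ‖J‖ = 1) (w : ℂ) :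
    ‖Complex.lift ⟨J, mul_self_eq_neg_one hre hnorm⟩ w‖ = ‖w‖ := by
  have hJ : J.imI ^ 2 + J.imJ ^ 2 + J.imK ^ 2 = 1 := by
    have := normSq_eq_norm_mul_self J
    rw [normSq_def', hnorm, hre] at this
    linarith
  rw [← sq_eq_sq₀ (norm_nonneg _) (norm_nonneg _), sq, ← normSq_eq_norm_mul_self, normSq_def',
    Complex.sq_norm, Complex.normSq_apply]
  simp only [lift_apply, liftAux_apply, algebraMap_def, re_add, re_coe, re_smul, hre, smul_eq_mul,
    mul_zero, add_zero, imI_add, imI_coe, imI_smul, zero_add, imJ_add, imJ_coe, imJ_smul, imK_add,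
    imK_coe, imK_smul]
  linear_combination w.im ^ 2 * hJ

theorem Quaternion.re_mul_eq_re_mul_im (hre : J.re = 0) (a : ℍ) : (J * a).re = (J * a.im).re := by
  conv_lhs => rw [← re_add_im a]
  rw [mul_add, re_add, mul_coe_eq_smul, re_smul, hre, smul_zero, zero_add]

theorem Quaternion.abs_re_mul_le_norm_im (hre : J.re = 0) (hnorm : ‖J‖ = 1) (a : ℍ) :
    |(J * a).re| ≤ ‖a.im‖ := by
  rw [re_mul_eq_re_mul_im hre]
  simpa [hnorm] using abs_re_le_norm (J * a.im)

theorem Quaternion.sq_norm_sliceCoeff (J a : ℍ) :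
    ‖sliceCoeff J a‖ ^ 2 = a.re ^ 2 + (J * a).re ^ 2 := by
  rw [Complex.sq_norm, sliceCoeff, Complex.normSq_mk]
  ring

theorem Quaternion.norm_sliceCoeff_le (hre : J.re = 0) (hnorm : ‖J‖ = 1) (a : ℍ) :
    ‖sliceCoeff J a‖ ≤ ‖a‖ := by
  rw [← sq_le_sq₀ (norm_nonneg _) (norm_nonneg _), sq_norm_sliceCoeff,
    sq_norm_eq_re_sq_add_sq_norm_im]
  exact add_le_add_right (sq_le_sq.2 ((abs_re_mul_le_norm_im hre hnorm a).trans (le_abs_self _))) _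

theorem Quaternion.exists_norm_sliceCoeff_eq (a : ℍ) :
    ∃ J : ℍ, J.re = 0 ∧ ‖J‖ = 1 ∧ ‖sliceCoeff J a‖ = ‖a‖ := by
  suffices h : ∃ J : ℍ, J.re = 0 ∧ ‖J‖ = 1 ∧ |(J * a).re| = ‖a.im‖ by
    obtain ⟨J, hre, hnorm, hJa⟩ := h
    refine ⟨J, hre, hnorm, ?_⟩
    rw [← sq_eq_sq₀ (norm_nonneg _) (norm_nonneg _), sq_norm_sliceCoeff,
      sq_norm_eq_re_sq_add_sq_norm_im, ← sq_abs (J * a).re, hJa]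
  by_cases him : a.im = 0
  · let J : ℍ := ⟨0, 1, 0, 0⟩
    have hre : J.re = 0 := rfl
    refine ⟨J, hre, ?_, ?_⟩
    · rw [← sq_eq_sq₀ (norm_nonneg J) zero_le_one, one_pow, sq, ← normSq_eq_norm_mul_self,
        normSq_def']
      norm_num [J]
    · rw [re_mul_eq_re_mul_im hre, him, mul_zero, re_zero, abs_zero, norm_zero]
  · have hpos : 0 < ‖a.im‖ := norm_pos_iff.2 him
    refine ⟨‖a.im‖⁻¹ • a.im, by simp, by simp [norm_smul, hpos.ne'], ?_⟩
    rw [re_mul_eq_re_mul_im (by simp), smul_mul_assoc, re_smul, ← sq, sq_eq_neg_normSq.2 (re_im a),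
      normSq_eq_norm_mul_self]
    simp only [re_neg, re_coe, smul_eq_mul, mul_neg, abs_neg, abs_mul, abs_inv, abs_norm]
    field_simp

theorem Quaternion.re_tsum_lift_pow_mul (hre : J.re = 0) (hnorm : ‖J‖ = 1) {a : ℕ → ℍ} {z : ℂ}
    (ha : Summable fun k => ‖a k‖ * ‖z‖ ^ k) :
    (∑' k, Complex.lift ⟨J, mul_self_eq_neg_one hre hnorm⟩ z ^ k * a k).re =
      (∑' k, z ^ k * sliceCoeff J (a k)).re := by
  have hq : Summable fun k => Complex.lift ⟨J, mul_self_eq_neg_one hre hnorm⟩ z ^ k * a k :=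
    ha.of_norm_bounded fun k => by rw [norm_mul, norm_pow, norm_lift hre hnorm, mul_comm]
  have hc : Summable fun k => z ^ k * sliceCoeff J (a k) :=
    ha.of_norm_bounded fun k => by
      rw [norm_mul, norm_pow, mul_comm]
      gcongr
      exact norm_sliceCoeff_le hre hnorm _
  rw [re_tsum hq, Complex.re_tsum hc]
  exact tsum_congr fun k => by rw [← map_pow, re_lift_mul]

end Slice

theorem Quaternion.norm_coeff_mul_pow_le_of_abs_re_le {a : ℕ → ℍ} {r A : ℝ} (hr : 0 ≤ r)
    (ha : Summable fun k => ‖a k‖ * r ^ k)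
    (hA : ∀ q : ℍ, ‖q‖ = r → |(∑' k, q ^ k * a k).re| ≤ A) {n : ℕ} (hn : n ≠ 0) :
    ‖a n‖ * r ^ n ≤ 2 * A := by
  obtain ⟨J, hre, hnorm, hJ⟩ := exists_norm_sliceCoeff_eq (a n)
  rw [← hJ]
  refine Complex.norm_coeff_mul_pow_le_of_abs_re_le (b := fun k => sliceCoeff J (a k)) hr ?_
    (fun z hz => ?_) hn
  · exact ha.of_nonneg_of_le (fun k => by positivity)
      fun k => by gcongr; exact norm_sliceCoeff_le hre hnorm _
  · rw [← re_tsum_lift_pow_mul hre hnorm (hz ▸ ha)]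
    exact hA _ (by rw [norm_lift hre hnorm, hz])

theorem norm_tsum_pow_mul_le_of_norm_coeff_mul_pow_le {R : Type*} [NormedRing R] [CompleteSpace R]
    {a : ℕ → R} {z : R} {r ρ B : ℝ} (hz : ‖z‖ ≤ ρ) (hρr : ρ < r)
    (ha : ∀ n, n ≠ 0 → ‖a n‖ * r ^ n ≤ B) :
    ‖∑' n, z ^ n * a n‖ ≤ ‖a 0‖ + B * (ρ / (r - ρ)) := by
  have hρ : 0 ≤ ρ := (norm_nonneg z).trans hz
  have hr : 0 < r := hρ.trans_lt hρr
  have hx : 0 ≤ ρ / r := by positivity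
  have hx1 : ρ / r < 1 := (div_lt_one hr).2 hρr
  have htail : ∀ n, ‖z ^ (n + 1) * a (n + 1)‖ ≤ B * (ρ / r) ^ (n + 1) := fun n => by
    have hzn : ‖z ^ (n + 1)‖ ≤ ρ ^ (n + 1) :=
      (norm_pow_le' z n.succ_pos).trans (pow_le_pow_left₀ (norm_nonneg z) hz _)
    calc ‖z ^ (n + 1) * a (n + 1)‖ ≤ ρ ^ (n + 1) * ‖a (n + 1)‖ :=
          (norm_mul_le _ _).trans (mul_le_mul_of_nonneg_right hzn (norm_nonneg _))
      _ = (‖a (n + 1)‖ * r ^ (n + 1)) * (ρ / r) ^ (n + 1) := by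
          rw [div_pow]; field_simp
      _ ≤ B * (ρ / r) ^ (n + 1) :=
          mul_le_mul_of_nonneg_right (ha _ n.succ_ne_zero) (by positivity)
  have hgeom : HasSum (fun n => B * (ρ / r) ^ (n + 1)) (B * (ρ / (r - ρ))) := by
    have h := ((hasSum_geometric_of_lt_one hx hx1).mul_left (ρ / r)).mul_left B
    rw [show ρ / r * (1 - ρ / r)⁻¹ = ρ / (r - ρ) by field_simp] at h
    simpa only [pow_succ'] using h
  have hsum : Summable fun n => ‖z ^ (n + 1) * a (n + 1)‖ :=
    hgeom.summable.of_nonneg_of_le (fun _ => norm_nonneg _) htail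
  have hsum' : Summable fun n => z ^ n * a n :=
    (summable_nat_add_iff (f := fun n => z ^ n * a n) 1).1 hsum.of_norm
  rw [hsum'.tsum_eq_zero_add, pow_zero, one_mul]
  exact (norm_add_le _ _).trans (add_le_add_right ((norm_tsum_le_tsum_norm hsum).trans
    (hasSum_le htail hsum.hasSum hgeom)) _)

theorem borel_caratheodory_quaternion_general
    (q₀ : ℝ) (r : ℝ) (a : ℕ → ℍ)
    (r' : ℝ) (hr' : r < r')
    (hsum : Summable (fun n => ‖a n‖ * r' ^ n))
    (A : ℝ)
    (hA : ∀ q : ℍ, ‖q - (q₀ : ℍ)‖ = r →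
      |(∑' n, (q - (q₀ : ℍ)) ^ n * a n).re| ≤ A) :
    ∀ ρ : ℝ, 0 < ρ → ρ < r → ∀ q : ℍ, ‖q - (q₀ : ℍ)‖ ≤ ρ →
      ‖∑' n, (q - (q₀ : ℍ)) ^ n * a n‖ ≤
        ‖(a 0).im‖ + |(a 0).re| * ((r + ρ) / (r - ρ)) + 2 * A * (ρ / (r - ρ)) := by
  intro ρ hρ hρr q hq
  have hr : 0 ≤ r := hρ.le.trans hρr.le
  have ha : Summable fun n => ‖a n‖ * r ^ n :=
    hsum.of_nonneg_of_le (fun n => by positivity) fun n => by gcongr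
  have hcoeff : ∀ n, n ≠ 0 → ‖a n‖ * r ^ n ≤ 2 * A := fun n =>
    Quaternion.norm_coeff_mul_pow_le_of_abs_re_le hr ha
      fun p hp => by simpa using hA (p + q₀) (by simpa using hp)
  have hfactor : 1 ≤ (r + ρ) / (r - ρ) := by
    rw [le_div_iff₀ (sub_pos.2 hρr)]
    linarith
  calc ‖∑' n, (q - q₀) ^ n * a n‖ ≤ ‖a 0‖ + 2 * A * (ρ / (r - ρ)) :=
        norm_tsum_pow_mul_le_of_norm_coeff_mul_pow_le hq hρr hcoeff
    _ ≤ ‖(a 0).im‖ + |(a 0).re| * ((r + ρ) / (r - ρ)) + 2 * A * (ρ / (r - ρ)) := by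
        nlinarith [Quaternion.norm_le_abs_re_add_norm_im (a 0), abs_nonneg (a 0).re]

/-- Quaternionic Borel–Carathéodory theorem. -/
theorem borel_caratheodory_quaternion
    (q₀ : ℝ) (r : ℝ) (hr : 0 < r) (a : ℕ → ℍ)
    (r' : ℝ) (hr' : r < r')
    (hsum : Summable (fun n => ‖a n‖ * r' ^ n))
    (A : ℝ)
    (hA : ∀ q : ℍ, ‖q - (q₀ : ℍ)‖ = r →
      |(∑' n, (q - (q₀ : ℍ)) ^ n * a n).re| ≤ A) :
    ∀ ρ : ℝ, 0 < ρ → ρ < r → ∀ q : ℍ, ‖q - (q₀ : ℍ)‖ ≤ ρ →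
      ‖∑' n, (q - (q₀ : ℍ)) ^ n * a n‖ ≤
        ‖(a 0).im‖ + |(a 0).re| * ((r + ρ) / (r - ρ)) + 2 * A * (ρ / (r - ρ)) :=
  borel_caratheodory_quaternion_general q₀ r a r' hr' hsum A hA
end

section
/- (Weak Bohr theorem for slice regular functions.) Let a : ℕ → ℍ and f : ℍ → ℍ satisfy the Bohr hypotheses. Then for every q ∈ ℍ with ‖q‖ ≤ 1/6, the family (fun n => ‖qⁿ · a n‖) is summable and ∑' n, ‖qⁿ · a n‖ < 1. -/
local notation "ℍ" => Quaternion ℝ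

/-- `(f, a)` satisfies the Bohr hypotheses: `f` is continuous on the closed unit ball,
agrees with the power series `∑ qⁿ · a n` on the open unit ball, and `‖f‖ < 1` on the
closed unit ball. -/
def BohrHypotheses (f : ℍ → ℍ) (a : ℕ → ℍ) : Prop :=
  ContinuousOn f {q : ℍ | ‖q‖ ≤ 1} ∧
  (∀ q : ℍ, ‖q‖ < 1 → HasSum (fun n => q ^ n * a n) (f q)) ∧
  (∀ q : ℍ, ‖q‖ ≤ 1 → ‖f q‖ < 1)

/-!
Fix `n ≥ 1` and a quaternion `v` with `‖v‖ ≤ 1`, and write `v = Φ μ` for an embedding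
`Φ : ℂ → ℍ` of a complex slice. Averaging `f` over the points `r ζᵏ` of that slice, with `ζ` a
primitive `m`-th root of unity and the nonnegative weights `(1 + Re (μ̄ ζ^{kn})) / m` of total
mass `1`, keeps the modulus at most `1`; on the power series the average kills every coefficient
of index below `m - n` except `a 0` and `(rⁿ / 2) v a n`. Letting `m → ∞` and then `r → 1` gives
`‖a 0 + (1 / 2) v a n‖ ≤ 1`, and aligning `v a n` with `a 0` yields the Carathéodory-type bound
`‖a n‖ ≤ 2 (1 - ‖a 0‖)`. Summing it against `‖q‖ⁿ` with `‖q‖ < 1/3` gives the Bohr inequality.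
-/

open Finset ComplexConjugate Filter Topology

namespace Quaternion

theorem re_eq_zero_and_normSq_eq_one_of_mul_self {I : Quaternion ℝ} (hI : I * I = -1) :
    I.re = 0 ∧ normSq I = 1 := by
  have hre : (I * I).re = -1 := by rw [hI]; simp
  have hnormSq : normSq I * normSq I = 1 := by rw [← map_mul, hI]; simp
  rw [re_mul] at hre
  rw [normSq_def'] at hnormSq ⊢
  constructor <;> nlinarith [sq_nonneg I.re, sq_nonneg I.imI, sq_nonneg I.imJ, sq_nonneg I.imK]

theorem norm_liftAux (I : Quaternion ℝ) (hI : I * I = -1) (z : ℂ) :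
    ‖Complex.liftAux I hI z‖ = ‖z‖ := by
  obtain ⟨hre, hnormSq⟩ := re_eq_zero_and_normSq_eq_one_of_mul_self hI
  have hsq : ‖Complex.liftAux I hI z‖ ^ 2 = ‖z‖ ^ 2 := by
    rw [sq, ← normSq_eq_norm_mul_self, Complex.sq_norm, Complex.normSq_apply,
      Complex.liftAux_apply, normSq_def']
    rw [normSq_def'] at hnormSq
    simp only [re_add, imI_add, imJ_add, imK_add, re_smul, imI_smul, imJ_smul, imK_smul,
      algebraMap_def, re_coe, imI_coe, imJ_coe, imK_coe, hre, smul_eq_mul]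
    linear_combination z.im ^ 2 * hnormSq - z.im ^ 2 * I.re * hre
  exact (sq_eq_sq₀ (norm_nonneg _) (norm_nonneg _)).mp hsq

theorem exists_liftAux_eq (q : Quaternion ℝ) :
    ∃ (I : Quaternion ℝ) (hI : I * I = -1) (z : ℂ), Complex.liftAux I hI z = q := by
  by_cases him : q.im = 0
  · have hi : (⟨0, 1, 0, 0⟩ : Quaternion ℝ) * ⟨0, 1, 0, 0⟩ = -1 := by ext <;> simp
    -- the literal elaborates at a type that is only defeq to `Quaternion ℝ`; hide it
    obtain ⟨I, hI⟩ : ∃ I : Quaternion ℝ, I * I = -1 := ⟨_, hi⟩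
    refine ⟨I, hI, q.re, ((Complex.liftAux I hI).commutes q.re).trans ?_⟩
    simpa [him] using re_add_im q
  · have hpos : 0 < ‖q.im‖ := norm_pos_iff.mpr him
    refine ⟨‖q.im‖⁻¹ • q.im, ?_, ⟨q.re, ‖q.im‖⟩, ?_⟩
    · rw [smul_mul_smul_comm, ← sq, ← sq, im_sq, normSq_eq_norm_mul_self, smul_neg, ← coe_smul,
        smul_eq_mul, ← sq, inv_pow, inv_mul_cancel₀ (by positivity), coe_one]
    · rw [Complex.liftAux_apply, smul_smul, mul_inv_cancel₀ hpos.ne', one_smul, algebraMap_def,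
        re_add_im]

end Quaternion

theorem exists_norm_le_one_norm_add_smul_mul {D : Type*} [NormedDivisionRing D]
    [NormedAlgebra ℝ D] (b c : D) :
    ∃ v : D, ‖v‖ ≤ 1 ∧ ∀ s : ℝ, 0 ≤ s → ‖b + s • (v * c)‖ = ‖b‖ + s * ‖c‖ := by
  obtain ⟨u, hu, hbu⟩ : ∃ u : D, ‖u‖ = 1 ∧ b = ‖b‖ • u := by
    by_cases hb : b = 0
    · exact ⟨1, norm_one, by simp [hb]⟩
    · refine ⟨‖b‖⁻¹ • b, ?_, ?_⟩
      · rw [norm_smul, norm_inv, norm_norm, inv_mul_cancel₀ (norm_ne_zero_iff.mpr hb)]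
      · rw [smul_smul, mul_inv_cancel₀ (norm_ne_zero_iff.mpr hb), one_smul]
  refine ⟨‖c‖ • (u * c⁻¹), ?_, fun s hs => ?_⟩
  · rw [norm_smul, norm_mul, norm_inv, hu, one_mul, norm_norm]
    exact mul_inv_le_one
  · have hvc : ‖c‖ • (u * c⁻¹) * c = ‖c‖ • u := by
      rcases eq_or_ne c 0 with rfl | hc
      · simp
      · rw [smul_mul_assoc, mul_assoc, inv_mul_cancel₀ hc, mul_one]
    rw [hvc, smul_smul, hbu, norm_smul, norm_norm, ← add_smul, norm_smul, hu, mul_one,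
      Real.norm_of_nonneg (by positivity), mul_one]

theorem IsPrimitiveRoot.sum_range_pow_zpow {K : Type*} [Field K] {ζ : K} {m : ℕ}
    (hζ : IsPrimitiveRoot ζ m) {N : ℤ} (hN : |N| < m) :
    ∑ k ∈ range m, (ζ ^ k) ^ N = if N = 0 then (m : K) else 0 := by
  split_ifs with h0
  · simp [h0]
  have hne : ζ ^ N ≠ 1 := fun h =>
    h0 (Int.eq_zero_of_abs_lt_dvd ((hζ.zpow_eq_one_iff_dvd N).mp h) hN)
  have hpow : ∀ k : ℕ, (ζ ^ k) ^ N = (ζ ^ N) ^ k := fun k => by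
    rw [← zpow_natCast, ← zpow_mul, mul_comm, zpow_mul, zpow_natCast]
  rw [sum_congr rfl fun k _ => hpow k, geom_sum_eq hne, ← hpow, hζ.pow_eq_one, one_zpow,
    sub_self, zero_div]

theorem Complex.ofReal_one_add_re_mul_pow {z : ℂ} (hz : ‖z‖ = 1) (μ : ℂ) (n j : ℕ) :
    ((1 + (conj μ * z ^ n).re : ℝ) : ℂ) * z ^ j
      = z ^ (j : ℤ) + conj μ / 2 * z ^ ((n : ℤ) + j) + μ / 2 * z ^ ((j : ℤ) - n) := by
  have hz0 : z ≠ 0 := norm_ne_zero_iff.mp (hz ▸ one_ne_zero)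
  rw [Complex.ofReal_add, Complex.ofReal_one, Complex.re_eq_add_conj, map_mul, map_pow,
    Complex.conj_conj, ← Complex.inv_eq_conj hz, zpow_add₀ hz0, zpow_sub₀ hz0]
  simp only [zpow_natCast, inv_pow]
  ring

theorem IsPrimitiveRoot.sum_one_add_re_smul_pow {ζ : ℂ} {m : ℕ} (hζ : IsPrimitiveRoot ζ m)
    (μ : ℂ) {n j : ℕ} (hn : 0 < n) (hnj : n + j < m) :
    ∑ k ∈ range m, ((1 + (conj μ * (ζ ^ k) ^ n).re) / m) • (ζ ^ k) ^ j
      = (if j = 0 then 1 else 0) + (if j = n then μ / 2 else 0) := by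
  have hm : m ≠ 0 := by omega
  have hterm : ∀ k ∈ range m, ((1 + (conj μ * (ζ ^ k) ^ n).re) / m) • (ζ ^ k) ^ j
      = (m : ℂ)⁻¹ * ((ζ ^ k) ^ (j : ℤ) + conj μ / 2 * (ζ ^ k) ^ ((n : ℤ) + j)
          + μ / 2 * (ζ ^ k) ^ ((j : ℤ) - n)) := fun k _ => by
    rw [← Complex.ofReal_one_add_re_mul_pow (by rw [norm_pow, hζ.norm'_eq_one hm, one_pow]),
      Complex.real_smul, Complex.ofReal_div, Complex.ofReal_natCast]
    ring
  rw [sum_congr rfl hterm, ← mul_sum, sum_add_distrib, sum_add_distrib, ← mul_sum, ← mul_sum,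
    hζ.sum_range_pow_zpow, hζ.sum_range_pow_zpow, hζ.sum_range_pow_zpow]
  · have hm0 : (m : ℂ) ≠ 0 := Nat.cast_ne_zero.mpr hm
    split_ifs <;> first | omega | (field_simp; ring)
  all_goals rw [abs_lt]; constructor <;> omega

theorem IsPrimitiveRoot.sum_one_add_re_div {ζ : ℂ} {m : ℕ} (hζ : IsPrimitiveRoot ζ m)
    (μ : ℂ) {n : ℕ} (hn : 0 < n) (hnm : n < m) :
    ∑ k ∈ range m, (1 + (conj μ * (ζ ^ k) ^ n).re) / m = 1 := by
  have h := hζ.sum_one_add_re_smul_pow μ hn (j := 0) (by omega)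
  simp only [pow_zero, if_pos, if_neg hn.ne, add_zero, Complex.real_smul, mul_one] at h
  exact_mod_cast h

theorem norm_sum_range_le_of_hasSum {E : Type*} [NormedAddCommGroup E] {h : ℕ → E} {b : ℕ → ℝ}
    {S : E} (hS : HasSum h S) (hb : Summable b) (hhb : ∀ j, ‖h j‖ ≤ b j) (M : ℕ) :
    ‖∑ j ∈ range M, h j‖ ≤ ‖S‖ + ∑' j, b (j + M) := by
  have htail : ‖S - ∑ j ∈ range M, h j‖ ≤ ∑' j, b (j + M) := by
    rw [← hS.tsum_eq, ← hS.summable.sum_add_tsum_nat_add M, add_sub_cancel_left]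
    exact tsum_of_norm_bounded ((summable_nat_add_iff M).mpr hb).hasSum fun j => hhb (j + M)
  calc ‖∑ j ∈ range M, h j‖ = ‖S - (S - ∑ j ∈ range M, h j)‖ := by rw [sub_sub_cancel]
    _ ≤ ‖S‖ + ‖S - ∑ j ∈ range M, h j‖ := norm_sub_le _ _
    _ ≤ ‖S‖ + ∑' j, b (j + M) := by gcongr

section PowerSeries

variable {a : ℕ → ℍ} {f : ℍ → ℍ}

theorem apply_zero_eq_coeff_zero (hsum : ∀ q : ℍ, ‖q‖ < 1 → HasSum (fun j => q ^ j * a j) (f q)) :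
    f 0 = a 0 := by
  simpa using (hsum 0 (by simp)).unique (hasSum_single 0 fun j hj => by simp [hj])

theorem summable_pow_mul_norm_of_hasSum
    (hsum : ∀ q : ℍ, ‖q‖ < 1 → HasSum (fun j => q ^ j * a j) (f q))
    {r : ℝ} (hr0 : 0 ≤ r) (hr1 : r < 1) : Summable fun j => r ^ j * ‖a j‖ := by
  obtain ⟨ρ, hrρ, hρ1⟩ := exists_between hr1
  have hρ0 : 0 < ρ := hr0.trans_lt hrρ
  have hρ : ‖(ρ : ℍ)‖ < 1 := by rwa [Quaternion.norm_coe, Real.norm_of_nonneg hρ0.le]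
  obtain ⟨C, hC⟩ := (hsum _ hρ).summable.tendsto_atTop_zero.norm.bddAbove_range
  have hbound : ∀ j, r ^ j * ‖a j‖ ≤ C * (r / ρ) ^ j := fun j => by
    have hj : ρ ^ j * ‖a j‖ ≤ C := by
      simpa [norm_mul, norm_pow, Quaternion.norm_coe, abs_of_pos hρ0] using hC ⟨j, rfl⟩
    rw [div_pow, mul_div_assoc', le_div_iff₀ (by positivity)]
    nlinarith [pow_nonneg hr0 j]
  exact .of_nonneg_of_le (fun j => by positivity) hbound
    ((summable_geometric_of_lt_one (by positivity) ((div_lt_one hρ0).mpr hrρ)).mul_left C)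

theorem hasSum_liftAux_sum_smul_pow_mul
    (hsum : ∀ q : ℍ, ‖q‖ < 1 → HasSum (fun j => q ^ j * a j) (f q))
    (I : ℍ) (hI : I * I = -1) {ι : Type*} (s : Finset ι) (w : ι → ℝ) {z : ι → ℂ}
    (hz : ∀ i ∈ s, ‖z i‖ < 1) :
    HasSum (fun j => Complex.liftAux I hI (∑ i ∈ s, w i • z i ^ j) * a j)
      (∑ i ∈ s, w i • f (Complex.liftAux I hI (z i))) := by
  have hnorm : ∀ i ∈ s, ‖Complex.liftAux I hI (z i)‖ < 1 := fun i hi => by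
    rw [Quaternion.norm_liftAux]; exact hz i hi
  convert hasSum_sum fun i hi => (hsum _ (hnorm i hi)).const_smul (w i) using 2 with j
  simp only [map_sum, map_smul, map_pow, sum_mul, smul_mul_assoc]

theorem norm_sum_range_liftAux_average_le
    (hsum : ∀ q : ℍ, ‖q‖ < 1 → HasSum (fun j => q ^ j * a j) (f q))
    (hf : ∀ q : ℍ, ‖q‖ < 1 → ‖f q‖ ≤ 1) (I : ℍ) (hI : I * I = -1) {ι : Type*} (s : Finset ι)
    {w : ι → ℝ} (hw0 : ∀ i ∈ s, 0 ≤ w i) (hw1 : ∑ i ∈ s, w i = 1) {z : ι → ℂ}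
    (hz : ∀ i ∈ s, ‖z i‖ = 1) {r : ℝ} (hr0 : 0 ≤ r) (hr1 : r < 1) (M : ℕ) :
    ‖∑ j ∈ range M, Complex.liftAux I hI ((r : ℂ) ^ j * ∑ i ∈ s, w i • z i ^ j) * a j‖
      ≤ 1 + ∑' j, r ^ (j + M) * ‖a (j + M)‖ := by
  set Φ := Complex.liftAux I hI
  have hrz : ∀ i ∈ s, ‖(r : ℂ) * z i‖ < 1 := fun i hi => by
    rwa [norm_mul, hz i hi, mul_one, Complex.norm_real, Real.norm_of_nonneg hr0]
  have hS := hasSum_liftAux_sum_smul_pow_mul hsum I hI s w hrz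
  simp only [mul_pow, ← mul_smul_comm, ← mul_sum] at hS
  have hSle : ‖∑ i ∈ s, w i • f (Φ ((r : ℂ) * z i))‖ ≤ 1 := by
    simpa using (convex_closedBall (0 : ℍ) 1).sum_mem hw0 hw1 fun i hi => by
      simpa using hf (Φ (r * z i)) (by rw [Quaternion.norm_liftAux]; exact hrz i hi)
  have hle : ∀ j, ‖Φ ((r : ℂ) ^ j * ∑ i ∈ s, w i • z i ^ j) * a j‖ ≤ r ^ j * ‖a j‖ := fun j => by
    have hc : ‖∑ i ∈ s, w i • z i ^ j‖ ≤ 1 := by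
      simpa using (convex_closedBall (0 : ℂ) 1).sum_mem hw0 hw1 fun i hi => by simp [hz i hi]
    rw [norm_mul, Quaternion.norm_liftAux, norm_mul, norm_pow, Complex.norm_real,
      Real.norm_of_nonneg hr0]
    gcongr
    exact mul_le_of_le_one_right (by positivity) hc
  exact (norm_sum_range_le_of_hasSum hS (summable_pow_mul_norm_of_hasSum hsum hr0 hr1) hle M).trans
    (by gcongr)

theorem norm_add_smul_mul_le_one_add_tsum
    (hsum : ∀ q : ℍ, ‖q‖ < 1 → HasSum (fun j => q ^ j * a j) (f q))
    (hf : ∀ q : ℍ, ‖q‖ < 1 → ‖f q‖ ≤ 1) {n : ℕ} (hn : 0 < n) {v : ℍ} (hv : ‖v‖ ≤ 1)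
    {r : ℝ} (hr0 : 0 ≤ r) (hr1 : r < 1) {M : ℕ} (hM : n < M) :
    ‖a 0 + (r ^ n / 2) • (v * a n)‖ ≤ 1 + ∑' j, r ^ (j + M) * ‖a (j + M)‖ := by
  obtain ⟨I, hI, μ, rfl⟩ := Quaternion.exists_liftAux_eq v
  set Φ := Complex.liftAux I hI
  have hμ : ‖μ‖ ≤ 1 := by rwa [Quaternion.norm_liftAux] at hv
  set m := n + M
  have hζ := Complex.isPrimitiveRoot_exp m (by omega)
  set ζ := Complex.exp (2 * Real.pi * Complex.I / m)
  have hζk : ∀ k : ℕ, ‖ζ ^ k‖ = 1 := fun k => by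
    rw [norm_pow, hζ.norm'_eq_one (by omega), one_pow]
  set w : ℕ → ℝ := fun k => (1 + (conj μ * (ζ ^ k) ^ n).re) / m
  have hw0 : ∀ k ∈ range m, 0 ≤ w k := fun k _ => by
    have hre := Complex.abs_re_le_norm (conj μ * (ζ ^ k) ^ n)
    rw [norm_mul, Complex.norm_conj, norm_pow, hζk, one_pow, mul_one] at hre
    exact div_nonneg (by linarith [neg_abs_le (conj μ * (ζ ^ k) ^ n).re]) m.cast_nonneg
  have hhead : ∑ j ∈ range M, Φ ((r : ℂ) ^ j * ∑ k ∈ range m, w k • (ζ ^ k) ^ j) * a j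
      = a 0 + (r ^ n / 2) • (Φ μ * a n) := by
    have hμ2 : (r : ℂ) ^ n * (μ / 2) = (r ^ n / 2 : ℝ) • μ := by
      rw [Complex.real_smul]; push_cast; ring
    rw [sum_congr rfl fun j hj => by
      rw [hζ.sum_one_add_re_smul_pow μ hn (by rw [mem_range] at hj; omega)]]
    simp only [mul_add, map_add, add_mul, sum_add_distrib, mul_ite, mul_one, mul_zero,
      apply_ite Φ, map_zero, ite_mul, zero_mul, sum_ite_eq', mem_range, if_pos hM,
      if_pos (hn.trans hM), pow_zero, map_one, one_mul, hμ2, map_smul, smul_mul_assoc]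
  rw [← hhead]
  exact norm_sum_range_liftAux_average_le hsum hf I hI (range m) hw0
    (hζ.sum_one_add_re_div μ hn (by omega)) (fun k _ => hζk k) hr0 hr1 M

theorem norm_coeff_zero_add_half_norm_coeff_le_one
    (hsum : ∀ q : ℍ, ‖q‖ < 1 → HasSum (fun j => q ^ j * a j) (f q))
    (hf : ∀ q : ℍ, ‖q‖ < 1 → ‖f q‖ ≤ 1) {n : ℕ} (hn : 0 < n) :
    ‖a 0‖ + ‖a n‖ / 2 ≤ 1 := by
  obtain ⟨v, hv, hva⟩ := exists_norm_le_one_norm_add_smul_mul (a 0) (a n)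
  have hr : ∀ r ∈ Set.Ico (0 : ℝ) 1, ‖a 0‖ + r ^ n / 2 * ‖a n‖ ≤ 1 := by
    rintro r ⟨hr0, hr1⟩
    rw [← hva _ (by positivity)]
    have htail := (tendsto_sum_nat_add fun j => r ^ j * ‖a j‖).const_add 1
    refine ge_of_tendsto (by simpa using htail) ?_
    filter_upwards [eventually_gt_atTop n] with M hM
    exact norm_add_smul_mul_le_one_add_tsum hsum hf hn hv hr0 hr1 hM
  have hcont : Continuous fun r : ℝ => ‖a 0‖ + r ^ n / 2 * ‖a n‖ := by fun_prop
  have h1 := le_of_tendsto ((hcont.tendsto 1).mono_left nhdsWithin_le_nhds)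
    (eventually_of_mem (Ico_mem_nhdsLT one_pos) hr)
  rw [one_pow] at h1
  linarith

end PowerSeries

theorem summable_and_tsum_lt_one_of_le_geometric {b : ℕ → ℝ} {ρ : ℝ} (hb : ∀ n, 0 ≤ b n)
    (hρ0 : 0 ≤ ρ) (hρ : 3 * ρ < 1) (h0 : b 0 < 1)
    (hle : ∀ n, b (n + 1) ≤ 2 * (1 - b 0) * ρ ^ (n + 1)) :
    Summable b ∧ ∑' n, b n < 1 := by
  have hρ1 : ρ < 1 := by linarith
  have hgeom : HasSum (fun n => 2 * (1 - b 0) * ρ ^ (n + 1)) (2 * (1 - b 0) * ρ / (1 - ρ)) := by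
    simpa only [pow_succ', ← mul_assoc, div_eq_mul_inv] using
      (hasSum_geometric_of_lt_one hρ0 hρ1).mul_left (2 * (1 - b 0) * ρ)
  have htail : Summable fun n => b (n + 1) :=
    .of_nonneg_of_le (fun n => hb _) hle hgeom.summable
  have hsum : Summable b := (summable_nat_add_iff 1).mp htail
  refine ⟨hsum, ?_⟩
  have htail_le : ∑' n, b (n + 1) ≤ 2 * (1 - b 0) * ρ / (1 - ρ) :=
    hasSum_le hle htail.hasSum hgeom
  have hkey : 2 * (1 - b 0) * ρ / (1 - ρ) < 1 - b 0 := by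
    rw [div_lt_iff₀ (by linarith)]; nlinarith
  rw [hsum.tsum_eq_zero_add]
  linarith

/-- Weak Bohr theorem for slice regular functions: the Bohr inequality holds for
`‖q‖ ≤ 1/6`. -/
theorem weak_bohr_theorem
    (a : ℕ → ℍ) (f : ℍ → ℍ)
    (hBohr : BohrHypotheses f a) :
    ∀ q : ℍ, ‖q‖ ≤ 1 / 6 →
      Summable (fun n => ‖q ^ n * a n‖) ∧ ∑' n, ‖q ^ n * a n‖ < 1 := by
  obtain ⟨-, hsum, hlt⟩ := hBohr
  have hf : ∀ q : ℍ, ‖q‖ < 1 → ‖f q‖ ≤ 1 := fun q hq => (hlt q hq.le).le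
  have ha0 : ‖a 0‖ < 1 := apply_zero_eq_coeff_zero hsum ▸ hlt 0 (by simp)
  intro q hq
  refine summable_and_tsum_lt_one_of_le_geometric (fun n => norm_nonneg _) (norm_nonneg q)
    (by linarith) (by simpa using ha0) fun n => ?_
  have han := norm_coeff_zero_add_half_norm_coeff_le_one hsum hf n.succ_pos
  rw [norm_mul, norm_pow, pow_zero, one_mul, mul_comm]
  gcongr
  linarith
end

section
/- (Root-of-unity section identity.) Let a : ℕ → ℍ be such that for every q ∈ ℍ with ‖q‖ < 1 the family (fun m => qᵐ · a m) is summable. Let n ≥ 1 and let ω ∈ ℍ be a primitive n-th root of unity, i.e. ωⁿ = 1 and ωᵏ ≠ 1 for all 1 ≤ k < n. Then for every q ∈ ℍ with ‖q‖ < 1 and q·ω = ω·q, the family (fun m => q^(n·m) · a (n·m)) is summable and ∑_{k=0}^{n−1} (∑' m, (q·ωᵏ)ᵐ · a m) = (n : ℍ) · ∑' m, q^(n·m) · a (n·m). -/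
local notation "ℍ" => Quaternion ℝ

/-- Root-of-unity section identity: averaging a quaternionic power series over the
powers of a primitive `n`-th root of unity commuting with `q` extracts the
multisection `∑ q^{nm} · a_{nm}`. -/
theorem root_of_unity_section
    (a : ℕ → ℍ)
    (hsum : ∀ q : ℍ, ‖q‖ < 1 → Summable (fun m => q ^ m * a m))
    (n : ℕ) (hn : 1 ≤ n)
    (ω : ℍ) (hω : ω ^ n = 1) (hprim : ∀ k : ℕ, 1 ≤ k → k < n → ω ^ k ≠ 1) :
    ∀ q : ℍ, ‖q‖ < 1 → q * ω = ω * q →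
      Summable (fun m => q ^ (n * m) * a (n * m)) ∧
      ∑ k ∈ Finset.range n, (∑' m, (q * ω ^ k) ^ m * a m) =
        (n : ℍ) * ∑' m, q ^ (n * m) * a (n * m) := by
  intro q hq hcomm
  have hn0 : n ≠ 0 := by omega
  have hcomm' : Commute q ω := hcomm
  -- norm of ω is 1
  have hnormω : ‖ω‖ = 1 := by
    have h1 : ‖ω‖ ^ n = 1 := by rw [← norm_pow, hω, norm_one]
    by_contra hne
    rcases lt_or_gt_of_ne hne with hl | hg
    · exact absurd h1 (ne_of_lt (pow_lt_one₀ (norm_nonneg ω) hl hn0))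
    · exact absurd h1 (ne_of_gt (one_lt_pow₀ hg hn0))
  -- geometric sum key lemma
  have key : ∀ m : ℕ, (∑ k ∈ Finset.range n, (ω ^ k) ^ m) = if n ∣ m then (n : ℍ) else 0 := by
    intro m
    have hrc : ∀ k, (ω ^ k) ^ m = (ω ^ m) ^ k := fun k => by
      rw [← pow_mul, mul_comm, pow_mul]
    simp_rw [hrc]
    by_cases h : n ∣ m
    · obtain ⟨t, rfl⟩ := h
      have : ω ^ (n * t) = 1 := by rw [pow_mul, hω, one_pow]
      simp [this]
    · have hωm : ω ^ m ≠ 1 := by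
        have hmod : ω ^ m = ω ^ (m % n) := by
          conv_lhs => rw [← Nat.div_add_mod m n]
          rw [pow_add, pow_mul, hω, one_pow, one_mul]
        rw [hmod]
        exact hprim _ (Nat.one_le_iff_ne_zero.2
          (fun h0 => h (Nat.dvd_of_mod_eq_zero h0))) (Nat.mod_lt _ (by omega))
      have hgeom := geom_sum_mul (ω ^ m) n
      have h1 : (ω ^ m) ^ n = 1 := by rw [← pow_mul, mul_comm, pow_mul, hω, one_pow]
      rw [h1, sub_self] at hgeom
      rw [if_neg h]
      rcases mul_eq_zero.1 hgeom with h2 | h2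
      · exact h2
      · exact absurd (sub_eq_zero.1 h2) hωm
  -- summability of each slice
  have hsummul : ∀ k, Summable (fun m => (q * ω ^ k) ^ m * a m) := fun k => hsum _ (by
    rw [norm_mul, norm_pow, hnormω, one_pow, mul_one]; exact hq)
  -- summability of the multisection
  have hinj : Function.Injective (fun m : ℕ => n * m) := fun x y h => by
    exact Nat.eq_of_mul_eq_mul_left (by omega) h
  have hs2 : Summable (fun m => q ^ (n * m) * a (n * m)) :=
    (hsum q hq).comp_injective hinj
  refine ⟨hs2, ?_⟩
  -- pointwise identity
  have hpt : ∀ m, (∑ k ∈ Finset.range n, (q * ω ^ k) ^ m * a m)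
      = (if n ∣ m then (n : ℍ) * (q ^ m * a m) else 0) := by
    intro m
    have hmp : ∀ k, (q * ω ^ k) ^ m = q ^ m * (ω ^ k) ^ m :=
      fun k => (hcomm'.pow_right k).mul_pow m
    calc (∑ k ∈ Finset.range n, (q * ω ^ k) ^ m * a m)
        = q ^ m * ((∑ k ∈ Finset.range n, (ω ^ k) ^ m) * a m) := by
          rw [Finset.sum_mul, Finset.mul_sum]
          exact Finset.sum_congr rfl fun k _ => by rw [hmp k, mul_assoc]
      _ = (if n ∣ m then (n : ℍ) * (q ^ m * a m) else 0) := by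
          rw [key m]
          split
          · rw [← mul_assoc, ← mul_assoc, (Nat.cast_commute n (q ^ m)).eq]
          · simp
  rw [← Summable.tsum_finsetSum (fun k _ => hsummul k)]
  rw [tsum_congr hpt]
  have hg : ∀ t : ℕ, (fun m => if n ∣ m then (n : ℍ) * (q ^ m * a m) else 0) (n * t)
      = (n : ℍ) * (q ^ (n * t) * a (n * t)) := fun t => if_pos ⟨t, rfl⟩
  rw [← Function.Injective.tsum_eq hinj (by
    intro m hm
    by_cases h : n ∣ m
    · obtain ⟨t, rfl⟩ := h
      exact ⟨t, rfl⟩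
    · exact absurd (if_neg h) hm)]
  rw [tsum_congr hg]
  exact (hs2.tsum_mul_left _)
end

section
/- (Multisection bound.) Let a : ℕ → ℍ and f : ℍ → ℍ satisfy the Bohr hypotheses. Then for every n ≥ 1 and every w ∈ ℍ with ‖w‖ < 1, the family (fun m => wᵐ · a (n·m)) is summable and ‖∑' m, wᵐ · a (n·m)‖ < 1. -/
/-!
Every quaternion lies in a slice `ℝ + ℝJ` with `J² = -1`, a copy of `ℂ`. Inside that slice take
`c` with `cⁿ = w` and a primitive `n`-th root of unity `ζ`. Averaging the power series of `f` over
the `n` points `ζᵏc`, all of norm `‖c‖ < 1`, kills the terms with `n ∤ m`, so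
`Φ(w) = (1/n) ∑ₖ f(ζᵏc)` is an average of `n` points of the open unit ball.
-/

local notation "ℍ" => Quaternion ℝ

open Finset

theorem IsPrimitiveRoot.sum_pow_mul_eq_ite {S : Type*} [CommRing S] [NoZeroDivisors S] {ζ : S}
    {n : ℕ} (hζ : IsPrimitiveRoot ζ n) (m : ℕ) :
    ∑ k ∈ range n, ζ ^ (k * m) = if n ∣ m then (n : S) else 0 := by
  simp_rw [mul_comm _ m, pow_mul]
  split_ifs with hm
  · simp [(hζ.pow_eq_one_iff_dvd m).2 hm]
  · have hne : ζ ^ m - 1 ≠ 0 := sub_ne_zero.2 fun h => hm ((hζ.pow_eq_one_iff_dvd m).1 h)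
    have hgeom : (∑ k ∈ range n, (ζ ^ m) ^ k) * (ζ ^ m - 1) = 0 := by
      rw [geom_sum_mul, ← pow_mul, mul_comm, pow_mul, hζ.pow_eq_one, one_pow, sub_self]
    simpa [hne] using hgeom

theorem norm_eq_one_of_pow_eq_one {R : Type*} [NormedDivisionRing R] {ζ : R} {n : ℕ}
    (h : ζ ^ n = 1) (hn : n ≠ 0) : ‖ζ‖ = 1 := by
  rw [← pow_eq_one_iff_of_nonneg (norm_nonneg ζ) hn, ← norm_pow, h, norm_one]

theorem hasSum_multisection {S R : Type*} [Field S] [CharZero S] [DivisionRing R]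
    [TopologicalSpace R] [IsTopologicalRing R] (φ : S →+* R) {ζ c : S} {n : ℕ} (hn : n ≠ 0)
    (hζ : IsPrimitiveRoot ζ n) {a F : ℕ → R}
    (hF : ∀ k < n, HasSum (fun m => φ (ζ ^ k * c) ^ m * a m) (F k)) :
    HasSum (fun j => φ c ^ (n * j) * a (n * j)) ((n : R)⁻¹ * ∑ k ∈ range n, F k) := by
  have hnR : (n : R) ≠ 0 := by
    rw [← map_natCast φ]
    exact (map_ne_zero φ).2 (Nat.cast_ne_zero.2 hn)
  have hfilter : ∀ m, (n : R)⁻¹ * ∑ k ∈ range n, φ (ζ ^ k * c) ^ m * a m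
      = if n ∣ m then φ c ^ m * a m else 0 := by
    intro m
    simp_rw [← map_pow, ← sum_mul, ← map_sum, mul_pow, ← pow_mul, ← sum_mul,
      hζ.sum_pow_mul_eq_ite m]
    split_ifs
    · rw [map_mul, map_natCast, ← mul_assoc, ← mul_assoc, inv_mul_cancel₀ hnR, one_mul]
    · simp
  have hsum := (hasSum_sum fun k hk => hF k (mem_range.1 hk)).mul_left (n : R)⁻¹
  simp only [hfilter] at hsum
  refine (((mul_right_injective₀ hn).hasSum_iff ?_).2 hsum).congr_fun fun j => ?_
  · rintro m hm
    rw [if_neg]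
    rintro ⟨j, rfl⟩
    exact hm ⟨j, rfl⟩
  · simp

theorem norm_inv_natCast_mul_sum_lt_one {R : Type*} [NormedDivisionRing R] [NormedAlgebra ℝ R]
    {n : ℕ} (hn : n ≠ 0) {F : ℕ → R} (hF : ∀ k < n, ‖F k‖ < 1) :
    ‖(n : R)⁻¹ * ∑ k ∈ range n, F k‖ < 1 := by
  have hnorm : ‖(n : R)‖ = n := by
    rw [← map_natCast (algebraMap ℝ R), norm_algebraMap', Real.norm_natCast]
  have hlt : ‖∑ k ∈ range n, F k‖ < n := calc
    ‖∑ k ∈ range n, F k‖ ≤ ∑ k ∈ range n, ‖F k‖ := norm_sum_le _ _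
    _ < ∑ _k ∈ range n, 1 := sum_lt_sum_of_nonempty (nonempty_range_iff.2 hn)
      fun k hk => hF k (mem_range.1 hk)
    _ = n := by simp
  rwa [norm_mul, norm_inv, hnorm, inv_mul_lt_one₀ (by positivity)]

theorem Quaternion.exists_mul_self_eq_neg_one_smul_eq_im (w : ℍ) :
    ∃ J : ℍ, J * J = -1 ∧ ‖w.im‖ • J = w.im := by
  by_cases him : w.im = 0
  · refine ⟨ofComplex Complex.I, ?_, by simp [him]⟩
    rw [← map_mul, Complex.I_mul_I, map_neg, map_one]
  · have hpos : 0 < ‖w.im‖ := norm_pos_iff.2 him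
    refine ⟨‖w.im‖⁻¹ • w.im, ?_, smul_inv_smul₀ hpos.ne' _⟩
    have hcancel : ‖w.im‖⁻¹ * ‖w.im‖⁻¹ * (‖w.im‖ * ‖w.im‖) = 1 := by field_simp
    rw [smul_mul_smul, ← sq w.im, im_sq, normSq_eq_norm_mul_self, smul_neg, ← coe_smul,
      smul_eq_mul, hcancel, coe_one]

theorem Quaternion.exists_complex_algHom_apply_eq (w : ℍ) :
    ∃ (φ : ℂ →ₐ[ℝ] ℍ) (z : ℂ), φ z = w := by
  obtain ⟨J, hJ, hwJ⟩ := exists_mul_self_eq_neg_one_smul_eq_im w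
  refine ⟨Complex.liftAux J hJ, ⟨w.re, ‖w.im‖⟩, ?_⟩
  rw [Complex.liftAux_apply, hwJ]
  exact w.re_add_im

/-- Multisection bound: the multisection `Φ(w) = ∑' m, wᵐ · a (n·m)` of `f` again maps
the open unit ball into itself. -/
theorem multisection_bound
    (a : ℕ → ℍ) (f : ℍ → ℍ)
    (hBohr : BohrHypotheses f a) :
    ∀ n : ℕ, 1 ≤ n → ∀ w : ℍ, ‖w‖ < 1 →
      Summable (fun m => w ^ m * a (n * m)) ∧
      ‖∑' m, w ^ m * a (n * m)‖ < 1 := by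
  obtain ⟨-, hf, hf_lt⟩ := hBohr
  intro n hn w hw
  have hn0 : n ≠ 0 := Nat.one_le_iff_ne_zero.1 hn
  obtain ⟨φ, z, rfl⟩ := Quaternion.exists_complex_algHom_apply_eq w
  obtain ⟨c, rfl⟩ := IsAlgClosed.exists_pow_nat_eq z hn
  obtain ⟨ζ, hζ⟩ : ∃ ζ : ℂ, IsPrimitiveRoot ζ n := ⟨_, Complex.isPrimitiveRoot_exp n hn0⟩
  have hc : ‖φ c‖ < 1 := by
    rwa [map_pow, norm_pow, pow_lt_one_iff_of_nonneg (norm_nonneg _) hn0] at hw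
  have hpoints : ∀ k, ‖φ (ζ ^ k * c)‖ < 1 := fun k => by
    rwa [map_mul, map_pow, norm_mul, norm_pow,
      norm_eq_one_of_pow_eq_one (by rw [← map_pow, hζ.pow_eq_one, map_one]) hn0, one_pow, one_mul]
  have hsum := hasSum_multisection φ.toRingHom hn0 hζ fun k _ => hf _ (hpoints k)
  simp only [AlgHom.toRingHom_eq_coe, RingHom.coe_coe, pow_mul] at hsum
  rw [map_pow]
  exact ⟨hsum.summable,
    hsum.tsum_eq ▸ norm_inv_natCast_mul_sum_lt_one hn0 fun k _ => hf_lt _ (hpoints k).le⟩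
end

section
/- (Bohr theorem for slice regular functions.) Let a : ℕ → ℍ and f : ℍ → ℍ satisfy the Bohr hypotheses. Then for every q ∈ ℍ with ‖q‖ ≤ 1/3, the family (fun n => ‖qⁿ · a n‖) is summable and ∑' n, ‖qⁿ · a n‖ < 1. -/
/-!
The coefficient bound behind Bohr's theorem is Wiener's inequality `|aₙ| ≤ 1 - |a₀|²` (`n ≥ 1`).
For a complex power series `ψ` mapping the unit disc into the closed disc, the case `n = 1` is
the Schwarz–Pick lemma at the origin: compose `ψ` with the disc automorphism sending `ψ 0` to `0`
and apply the Schwarz lemma. Averaging `ψ` over the rotations `z ↦ ζᵏ z` by the `n`-th roots of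
unity leaves the series `∑ⱼ c_{nj} wʲ` in `w = zⁿ`, which reduces the general case to `n = 1`.

For quaternionic coefficients, multiply on the right by a unit quaternion making `a₀` real and
nonnegative, then conjugate so that `aₙ` lands in the slice `ℂ ⊂ ℍ`. On that slice the
`ℂ`-component of the rotated `f` is a complex power series bounded by `1`, whose `0`-th and
`n`-th coefficients have moduli `|a₀|` and `|aₙ|`. Finally, for `‖q‖ ≤ 1/3`,
`|a₀| + (1 - |a₀|²) ∑_{n ≥ 1} 3⁻ⁿ = 1 - (1 - |a₀|)² / 2 < 1`.
-/

local notation "ℍ" => Quaternion ℝ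

open Metric Set FormalMultilinearSeries ComplexConjugate Finset

theorem norm_sub_le_norm_one_sub_conj_mul {d w : ℂ} (hd : ‖d‖ ≤ 1) (hw : ‖w‖ ≤ 1) :
    ‖w - d‖ ≤ ‖1 - conj d * w‖ := by
  have key : ‖1 - conj d * w‖ ^ 2 - ‖w - d‖ ^ 2 = (1 - ‖d‖ ^ 2) * (1 - ‖w‖ ^ 2) := by
    simp only [Complex.sq_norm, Complex.normSq_apply, Complex.sub_re, Complex.sub_im,
      Complex.mul_re, Complex.mul_im, Complex.conj_re, Complex.conj_im, Complex.one_re,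
      Complex.one_im]
    ring
  have : 0 ≤ (1 - ‖d‖ ^ 2) * (1 - ‖w‖ ^ 2) :=
    mul_nonneg (by nlinarith [norm_nonneg d]) (by nlinarith [norm_nonneg w])
  exact (sq_le_sq₀ (norm_nonneg _) (norm_nonneg _)).1 (by linarith)

theorem norm_deriv_zero_le_one_sub_sq_of_mapsTo_ball {ψ : ℂ → ℂ}
    (hd : DifferentiableOn ℂ ψ (ball 0 1)) (hmaps : MapsTo ψ (ball 0 1) (closedBall 0 1))
    (h0 : ‖ψ 0‖ < 1) :
    ‖deriv ψ 0‖ ≤ 1 - ‖ψ 0‖ ^ 2 := by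
  set d := ψ 0
  have hψ : ∀ z ∈ ball (0 : ℂ) 1, ‖ψ z‖ ≤ 1 := fun z hz => mem_closedBall_zero_iff.1 (hmaps hz)
  have hden : ∀ z ∈ ball (0 : ℂ) 1, 1 - conj d * ψ z ≠ 0 := by
    refine fun z hz => sub_ne_zero.2 fun h => ?_
    have : ‖conj d * ψ z‖ < 1 := by
      rw [norm_mul, RCLike.norm_conj]
      exact mul_lt_one_of_nonneg_of_lt_one_left (norm_nonneg _) h0 (hψ z hz)
    simp [← h] at this
  set G : ℂ → ℂ := fun z => (ψ z - d) / (1 - conj d * ψ z)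
  have hG : DifferentiableOn ℂ G (ball 0 1) :=
    (hd.sub_const d).div ((differentiableOn_const 1).sub (hd.const_mul _)) hden
  have hGmaps : MapsTo G (ball 0 1) (closedBall (G 0) 1) := by
    intro z hz
    rw [mem_closedBall, show G 0 = 0 by simp [G, d], dist_zero_right, norm_div]
    exact div_le_one_of_le₀ (norm_sub_le_norm_one_sub_conj_mul h0.le (hψ z hz)) (norm_nonneg _)
  have hpos : 0 < 1 - ‖d‖ ^ 2 := by nlinarith [norm_nonneg d]
  have hderiv : HasDerivAt G (deriv ψ 0 / ((1 - ‖d‖ ^ 2 : ℝ) : ℂ)) 0 := by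
    have hψ' := (hd.differentiableAt (ball_mem_nhds 0 one_pos)).hasDerivAt
    refine ((hψ'.sub_const d).div ((hψ'.const_mul (conj d)).const_sub 1)
      (hden 0 (mem_ball_self one_pos))).congr_deriv ?_
    have : 1 - conj d * d ≠ 0 := hden 0 (mem_ball_self one_pos)
    rw [Complex.conj_mul'] at this ⊢
    push_cast
    field_simp
    ring
  have := Complex.norm_deriv_le_one_of_mapsTo_ball hG hGmaps one_pos
  rwa [hderiv.deriv, norm_div, Complex.norm_real, Real.norm_of_nonneg hpos.le,
    div_le_one hpos] at this

theorem IsPrimitiveRoot.sum_pow_pow_eq_ite {R : Type*} [CommRing R] [IsDomain R] {ζ : R} {n : ℕ}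
    (hζ : IsPrimitiveRoot ζ n) (m : ℕ) :
    ∑ k ∈ range n, (ζ ^ m) ^ k = if n ∣ m then (n : R) else 0 := by
  split_ifs with hm
  · simp [(hζ.pow_eq_one_iff_dvd m).2 hm]
  · have hne : ζ ^ m - 1 ≠ 0 := sub_ne_zero.2 fun h => hm ((hζ.pow_eq_one_iff_dvd m).1 h)
    have h := geom_sum_mul (ζ ^ m) n
    rw [← pow_mul, mul_comm m n, pow_mul, hζ.pow_eq_one, one_pow, sub_self] at h
    exact (mul_eq_zero.1 h).resolve_right hne

/-- `c` are the Taylor coefficients of a function of the Schur class: holomorphic on the unit disc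
with values in the closed unit disc. -/
def IsSchurClass (c : ℕ → ℂ) : Prop :=
  ∀ z : ℂ, ‖z‖ < 1 → ∃ s, HasSum (fun m => c m * z ^ m) s ∧ ‖s‖ ≤ 1

namespace IsSchurClass

variable {c : ℕ → ℂ}

theorem one_le_radius (hc : IsSchurClass c) : 1 ≤ (ofScalars ℂ c).radius := by
  refine ENNReal.le_of_forall_nnreal_lt fun r hr =>
    (ofScalars ℂ c).le_radius_of_tendsto (l := 0) ?_
  obtain ⟨s, hs, -⟩ := hc r (by simpa using hr)
  simpa using hs.summable.tendsto_atTop_zero.norm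

theorem hasFPowerSeriesOnBall (hc : IsSchurClass c) :
    HasFPowerSeriesOnBall (ofScalarsSum (E := ℂ) c) (ofScalars ℂ c) 0 1 :=
  ((ofScalars ℂ c).hasFPowerSeriesOnBall (zero_lt_one.trans_le hc.one_le_radius)).mono one_pos
    hc.one_le_radius

theorem norm_coeff_one_le (hc : IsSchurClass c) (h0 : ‖c 0‖ < 1) :
    ‖c 1‖ ≤ 1 - ‖c 0‖ ^ 2 := by
  have hp := hc.hasFPowerSeriesOnBall
  have hψ0 : ofScalarsSum (E := ℂ) c 0 = c 0 := by simp
  have hmaps : MapsTo (ofScalarsSum (E := ℂ) c) (ball 0 1) (closedBall 0 1) := by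
    intro z hz
    obtain ⟨s, hs, hs1⟩ := hc z (mem_ball_zero_iff.1 hz)
    rw [mem_closedBall_zero_iff, ofScalars_sum_eq]
    simp_rw [smul_eq_mul]
    rwa [hs.tsum_eq]
  have hd : DifferentiableOn ℂ (ofScalarsSum (E := ℂ) c) (ball 0 1) := fun z hz =>
    (hp.analyticAt_of_mem (by rwa [← ENNReal.ofReal_one, Metric.eball_ofReal])).differentiableAt
      |>.differentiableWithinAt
  have := norm_deriv_zero_le_one_sub_sq_of_mapsTo_ball hd hmaps (by rwa [hψ0])
  rwa [hp.hasFPowerSeriesAt.deriv, ofScalars_apply_eq, hψ0, one_pow, smul_eq_mul, mul_one] at this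

theorem comp_mul_left (hc : IsSchurClass c) {n : ℕ} (hn : n ≠ 0) :
    IsSchurClass fun j => c (n * j) := by
  intro w hw
  obtain ⟨z, rfl⟩ := IsAlgClosed.exists_pow_nat_eq w (Nat.pos_of_ne_zero hn)
  have hz : ‖z‖ < 1 := by rwa [norm_pow, pow_lt_one_iff_of_nonneg (norm_nonneg _) hn] at hw
  have hζ := Complex.isPrimitiveRoot_exp n hn
  set ζ := Complex.exp (2 * Real.pi * Complex.I / n)
  choose s hs hs1 using fun k : ℕ =>
    hc (ζ ^ k * z) (by rwa [norm_mul, norm_pow, hζ.norm'_eq_one hn, one_pow, one_mul])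
  have hsum : HasSum (fun m => c m * z ^ m * if n ∣ m then (n : ℂ) else 0)
      (∑ k ∈ range n, s k) := by
    convert hasSum_sum fun k _ => hs k using 2 with m
    rw [← hζ.sum_pow_pow_eq_ite, mul_sum]
    refine sum_congr rfl fun k _ => ?_
    ring
  have hinj : Function.Injective (n * ·) := fun _ _ =>
    Nat.eq_of_mul_eq_mul_left (Nat.pos_of_ne_zero hn)
  have hvanish : ∀ m ∉ Set.range (n * ·), c m * z ^ m * (if n ∣ m then (n : ℂ) else 0) = 0 :=
    fun m hm => by rw [if_neg fun ⟨j, hj⟩ => hm ⟨j, hj.symm⟩, mul_zero]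
  have hnC : (n : ℂ) ≠ 0 := Nat.cast_ne_zero.2 hn
  refine ⟨(∑ k ∈ range n, s k) / n, ?_, ?_⟩
  · simpa [Function.comp_def, pow_mul, hnC] using
      ((hinj.hasSum_iff hvanish).2 hsum).div_const (n : ℂ)
  · rw [norm_div, Complex.norm_natCast, div_le_one (by positivity)]
    calc ‖∑ k ∈ range n, s k‖ ≤ ∑ k ∈ range n, ‖s k‖ := norm_sum_le _ _
      _ ≤ ∑ _k ∈ range n, (1 : ℝ) := sum_le_sum fun k _ => hs1 k
      _ = n := by simp

theorem norm_coeff_le (hc : IsSchurClass c) (h0 : ‖c 0‖ < 1) {n : ℕ} (hn : n ≠ 0) :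
    ‖c n‖ ≤ 1 - ‖c 0‖ ^ 2 := by
  simpa using (hc.comp_mul_left hn).norm_coeff_one_le (by simpa using h0)

end IsSchurClass

theorem Quaternion.sq_norm_eq_sum_sq (x : ℍ) :
    ‖x‖ ^ 2 = x.re ^ 2 + x.imI ^ 2 + x.imJ ^ 2 + x.imK ^ 2 := by
  rw [sq, ← normSq_eq_norm_mul_self, normSq_def']

theorem Quaternion.norm_coeComplex (z : ℂ) : ‖(z : ℍ)‖ = ‖z‖ := by
  refine (sq_eq_sq₀ (norm_nonneg _) (norm_nonneg _)).1 ?_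
  rw [sq_norm_eq_sum_sq, Complex.sq_norm, Complex.normSq_apply]
  simp [sq]

noncomputable def Quaternion.complexPart : ℍ →L[ℝ] ℂ :=
  LinearMap.toContinuousLinearMap
    { toFun := fun x => ⟨x.re, x.imI⟩
      map_add' := fun x y => by apply Complex.ext <;> simp
      map_smul' := fun r x => by apply Complex.ext <;> simp }

@[simp]
theorem Quaternion.complexPart_apply (x : ℍ) : complexPart x = ⟨x.re, x.imI⟩ := rfl

@[simp]
theorem Quaternion.complexPart_coeComplex (z : ℂ) : complexPart z = z := by
  apply Complex.ext <;> simp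

theorem Quaternion.complexPart_coeComplex_mul (z : ℂ) (x : ℍ) :
    complexPart (z * x) = z * complexPart x := by
  apply Complex.ext <;> simp [Complex.mul_re, Complex.mul_im]

theorem Quaternion.norm_complexPart_le (x : ℍ) : ‖complexPart x‖ ≤ ‖x‖ := by
  refine (sq_le_sq₀ (norm_nonneg _) (norm_nonneg _)).1 ?_
  rw [Complex.sq_norm, Complex.normSq_apply, sq_norm_eq_sum_sq]
  simp only [complexPart_apply]
  nlinarith [sq_nonneg x.imJ, sq_nonneg x.imK]

theorem Quaternion.exists_mul_eq_coeComplex_mul (b : ℍ) :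
    ∃ u : ℍ, u ≠ 0 ∧ ∃ z : ℂ, u * b = z * u := by
  set s := ‖b.im‖
  have hs : s ^ 2 = b.imI ^ 2 + b.imJ ^ 2 + b.imK ^ 2 := by simp [s, sq_norm_eq_sum_sq]
  by_cases hu : b.im + s * ((Complex.I : ℂ) : ℍ) = 0
  · refine ⟨1, one_ne_zero, ⟨b.re, -s⟩, ?_⟩
    rw [one_mul, mul_one, ← re_add_im b, eq_neg_of_add_eq_zero_left hu]
    ext <;> simp
  · -- `b.im` and `s i` both square to `-s²`, so `u = b.im + s i` satisfies `u b.im = s i u`.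
    refine ⟨_, hu, ⟨b.re, s⟩, ?_⟩
    ext <;> simp <;> linarith

theorem Quaternion.exists_norm_eq_one_mul_eq_norm (x : ℍ) : ∃ w : ℍ, ‖w‖ = 1 ∧ x * w = ‖x‖ := by
  rcases eq_or_ne x 0 with rfl | hx
  · exact ⟨1, norm_one, by simp⟩
  · refine ⟨(‖x‖⁻¹ : ℝ) • star x, ?_, ?_⟩
    · rw [norm_smul, norm_star, norm_inv, norm_norm, inv_mul_cancel₀ (norm_ne_zero_iff.2 hx)]
    · rw [mul_smul_comm, self_mul_star, normSq_eq_norm_mul_self, ← coe_smul, smul_eq_mul,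
        inv_mul_cancel_left₀ (norm_ne_zero_iff.2 hx)]

open Quaternion (complexPart complexPart_coeComplex complexPart_coeComplex_mul norm_coeComplex
  norm_complexPart_le ofComplex)

theorem isSchurClass_complexPart_mul_mul {a : ℕ → ℍ} {f : ℍ → ℍ}
    (hsum : ∀ q : ℍ, ‖q‖ < 1 → HasSum (fun n => q ^ n * a n) (f q))
    (hf : ∀ q : ℍ, ‖q‖ < 1 → ‖f q‖ ≤ 1) {u v : ℍ} (hu : u ≠ 0) (huv : ‖u‖ * ‖v‖ ≤ 1) :
    IsSchurClass fun n => complexPart (u * a n * v) := by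
  intro z hz
  have hq : ‖u⁻¹ * z * u‖ = ‖z‖ := by
    rw [norm_mul, norm_mul, norm_inv, norm_coeComplex]
    field_simp [norm_ne_zero_iff.2 hu]
  refine ⟨complexPart (u * f (u⁻¹ * z * u) * v), ?_, ?_⟩
  · have h := complexPart.hasSum (((hsum _ (hq ▸ hz)).mul_left u).mul_right v)
    convert h using 2 with m
    have hpow : ((z ^ m : ℂ) : ℍ) = (z : ℍ) ^ m := map_pow ofComplex z m
    rw [GroupWithZero.conj_pow₀ hu, ← hpow, mul_comm, ← complexPart_coeComplex_mul]
    simp only [mul_assoc, mul_inv_cancel_left₀ hu]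
  · calc ‖complexPart (u * f (u⁻¹ * z * u) * v)‖ ≤ ‖u * f (u⁻¹ * z * u) * v‖ :=
          norm_complexPart_le _
      _ = ‖f (u⁻¹ * z * u)‖ * (‖u‖ * ‖v‖) := by rw [norm_mul, norm_mul]; ring
      _ ≤ 1 := mul_le_one₀ (hf _ (hq ▸ hz)) (by positivity) huv

theorem Quaternion.norm_coeff_le_one_sub_sq_of_hasSum {a : ℕ → ℍ} {f : ℍ → ℍ}
    (hsum : ∀ q : ℍ, ‖q‖ < 1 → HasSum (fun n => q ^ n * a n) (f q))
    (hf : ∀ q : ℍ, ‖q‖ < 1 → ‖f q‖ ≤ 1) (h0 : ‖a 0‖ < 1) {n : ℕ} (hn : n ≠ 0) :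
    ‖a n‖ ≤ 1 - ‖a 0‖ ^ 2 := by
  obtain ⟨w, hw, hw0⟩ := exists_norm_eq_one_mul_eq_norm (a 0)
  obtain ⟨u, hu, z, hz⟩ := exists_mul_eq_coeComplex_mul (a n * w)
  have hu' : ‖u‖ ≠ 0 := norm_ne_zero_iff.2 hu
  have hc := isSchurClass_complexPart_mul_mul hsum hf hu (v := w * u⁻¹)
    (by rw [norm_mul, norm_inv, hw, one_mul, mul_inv_cancel₀ hu'])
  have hb : ∀ m, u * a m * (w * u⁻¹) = u * (a m * w) * u⁻¹ := fun m => by simp only [mul_assoc]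
  have hb0 : u * a 0 * (w * u⁻¹) = ((‖a 0‖ : ℂ) : ℍ) := by
    rw [hb, hw0, ← coe_commutes, mul_inv_cancel_right₀ hu, coeComplex_coe]
  have hbn : u * a n * (w * u⁻¹) = z := by rw [hb, hz, mul_inv_cancel_right₀ hu]
  have hzn : ‖z‖ = ‖a n‖ := by
    rw [← norm_coeComplex, ← hbn, norm_mul, norm_mul, norm_mul, norm_inv, hw]
    field_simp
  have hc0 : ‖complexPart (u * a 0 * (w * u⁻¹))‖ = ‖a 0‖ := by
    rw [hb0, complexPart_coeComplex, Complex.norm_real, norm_norm]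
  have hcn : ‖complexPart (u * a n * (w * u⁻¹))‖ = ‖a n‖ := by
    rw [hbn, complexPart_coeComplex, hzn]
  have := hc.norm_coeff_le (by rwa [hc0]) hn
  beta_reduce at this
  rwa [hc0, hcn] at this

theorem summable_and_tsum_lt_one_of_le {t : ℕ → ℝ} {A : ℝ} (ht : ∀ n, 0 ≤ t n) (hA : A < 1)
    (h0 : t 0 = A) (hle : ∀ n, n ≠ 0 → t n ≤ (1 - A ^ 2) * (1 / 3) ^ n) :
    Summable t ∧ ∑' n, t n < 1 := by
  have hgeo : HasSum (fun n : ℕ => (1 - A ^ 2) * (1 / 3) ^ (n + 1)) ((1 - A ^ 2) / 2) := by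
    have h := (hasSum_geometric_of_lt_one (r := (1 / 3 : ℝ)) (by norm_num) (by norm_num)).mul_left
      ((1 - A ^ 2) / 3)
    rw [show (1 - A ^ 2) / 3 * (1 - 1 / 3)⁻¹ = (1 - A ^ 2) / 2 by norm_num; ring] at h
    exact h.congr_fun fun n => by ring
  have htail : Summable fun n => t (n + 1) :=
    hgeo.summable.of_nonneg_of_le (fun n => ht _) fun n => hle (n + 1) n.succ_ne_zero
  have hs : Summable t := (summable_nat_add_iff 1).1 htail
  refine ⟨hs, ?_⟩
  have hbound : ∑' n, t (n + 1) ≤ (1 - A ^ 2) / 2 :=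
    hgeo.tsum_eq ▸ htail.tsum_le_tsum (fun n => hle (n + 1) n.succ_ne_zero) hgeo.summable
  rw [hs.tsum_eq_zero_add, h0]
  nlinarith [sq_nonneg (1 - A)]

/-- Bohr theorem for slice regular functions: the Bohr inequality holds for
`‖q‖ ≤ 1/3`. -/
theorem bohr_theorem
    (a : ℕ → ℍ) (f : ℍ → ℍ)
    (hBohr : BohrHypotheses f a) :
    ∀ q : ℍ, ‖q‖ ≤ 1 / 3 →
      Summable (fun n => ‖q ^ n * a n‖) ∧ ∑' n, ‖q ^ n * a n‖ < 1 := by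
  obtain ⟨-, hsum, hlt⟩ := hBohr
  have hf0 : f 0 = a 0 := (hsum 0 (by simp)).unique <| by
    simpa using hasSum_single (f := fun n => (0 : ℍ) ^ n * a n) 0 fun m hm => by simp [hm]
  have ha0 : ‖a 0‖ < 1 := by simpa [hf0] using hlt 0 (by simp)
  intro q hq
  refine summable_and_tsum_lt_one_of_le (fun n => norm_nonneg _) ha0 (by simp) fun n hn => ?_
  calc ‖q ^ n * a n‖ = ‖q‖ ^ n * ‖a n‖ := by rw [norm_mul, norm_pow]
    _ ≤ (1 / 3) ^ n * (1 - ‖a 0‖ ^ 2) := by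
      gcongr
      exact Quaternion.norm_coeff_le_one_sub_sq_of_hasSum hsum (fun q hq => (hlt q hq.le).le) ha0 hn
    _ = (1 - ‖a 0‖ ^ 2) * (1 / 3) ^ n := mul_comm _ _
end

section
/- (Sharpness of the Bohr radius 1/3.) For every q₀ ∈ ℍ with 1/3 < ‖q₀‖ < 1 there exists a sequence b : ℕ → ℍ such that: (i) the family (fun n => ‖b n‖) is summable; (ii) for every q ∈ ℍ with ‖q‖ ≤ 1 one has ‖∑' n, qⁿ · b n‖ < 1; and (iii) ∑' n, ‖q₀ⁿ · b n‖ > 1. -/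
local notation "ℍ" => Quaternion ℝ

/-!
For real `a ∈ [0, 1)` the Möbius map `φₐ(q) = (a - q)(1 - aq)⁻¹` sends the closed unit ball of `ℍ`
into itself, because `‖1 - aq‖² - ‖a - q‖² = (1 - a²)(1 - ‖q‖²)`. Its coefficients
`a, -(1 - a²), -(1 - a²)a, -(1 - a²)a², …` are real, and their Bohr sum at radius `r` is
`a + (1 - a²) r / (1 - ar)`, which exceeds `1` exactly when `r (1 + 2a) > 1`. For `r > 1/3` this
holds once `a` is close to `1`; multiplying the coefficients by some `t < 1` with `t` times the Bohr
sum still above `1` makes the modulus of the series strictly less than `1` on the closed ball.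
-/

theorem norm_smul_sub_le_norm_sub_smul {E : Type*} [NormedAddCommGroup E] [InnerProductSpace ℝ E]
    {e q : E} (he : ‖e‖ = 1) (hq : ‖q‖ ≤ 1) {a : ℝ} (ha : |a| ≤ 1) :
    ‖a • e - q‖ ≤ ‖e - a • q‖ := by
  have hsq : ‖e - a • q‖ ^ 2 - ‖a • e - q‖ ^ 2 = (1 - a ^ 2) * (1 - ‖q‖ ^ 2) := by
    rw [norm_sub_sq_real, norm_sub_sq_real, norm_smul, norm_smul, real_inner_smul_left,
      real_inner_smul_right, he, Real.norm_eq_abs, mul_pow, mul_pow, sq_abs]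
    ring
  have hprod : 0 ≤ (1 - a ^ 2) * (1 - ‖q‖ ^ 2) :=
    mul_nonneg (by nlinarith [abs_nonneg a, sq_abs a]) (by nlinarith [norm_nonneg q])
  exact (pow_le_pow_iff_left₀ (norm_nonneg _) (norm_nonneg _) two_ne_zero).1 (by linarith)

theorem norm_smul_lt_one_of_abs_lt_one {E : Type*} [SeminormedAddCommGroup E] [NormedSpace ℝ E]
    {a : ℝ} {q : E} (ha : |a| < 1) (hq : ‖q‖ ≤ 1) : ‖a • q‖ < 1 := by
  rw [norm_smul, Real.norm_eq_abs]
  exact mul_lt_one_of_nonneg_of_lt_one_left (abs_nonneg a) ha hq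

theorem one_sub_ne_zero_of_norm_lt_one {R : Type*} [NormedRing R] [NormOneClass R] {x : R}
    (h : ‖x‖ < 1) : 1 - x ≠ 0 :=
  sub_ne_zero.2 (ne_of_apply_ne norm (by rw [norm_one]; exact h.ne'))

def mobiusCoeff (a : ℝ) : ℕ → ℝ
  | 0 => a
  | n + 1 => -((1 - a ^ 2) * a ^ n)

noncomputable def mobiusBohrSum (a r : ℝ) : ℝ := a + (1 - a ^ 2) * r / (1 - a * r)

theorem hasSum_pow_mul_mobiusCoeff {A : Type*} [NormedDivisionRing A] [NormedAlgebra ℝ A]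
    {a : ℝ} {q : A} (h : ‖a • q‖ < 1) :
    HasSum (fun n => q ^ n * algebraMap ℝ A (mobiusCoeff a n))
      ((algebraMap ℝ A a - q) * (1 - a • q)⁻¹) := by
  have hshift : HasSum (fun n => q ^ (n + 1) * algebraMap ℝ A (mobiusCoeff a (n + 1)))
      (-(1 - a ^ 2) • q * (1 - a • q)⁻¹) := by
    have hterm : ∀ n, q ^ (n + 1) * algebraMap ℝ A (mobiusCoeff a (n + 1))
        = -(1 - a ^ 2) • q * (a • q) ^ n := by
      intro n
      rw [mobiusCoeff, ← Algebra.commutes, ← Algebra.smul_def, smul_pow, pow_succ' q n,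
        smul_mul_assoc, mul_smul_comm, smul_smul]
      ring_nf
    simpa only [hterm] using (hasSum_geometric_of_norm_lt_one h).mul_left (-(1 - a ^ 2) • q)
  suffices e : (algebraMap ℝ A a - q) * (1 - a • q)⁻¹ = -(1 - a ^ 2) • q * (1 - a • q)⁻¹ +
      ∑ n ∈ Finset.range 1, q ^ n * algebraMap ℝ A (mobiusCoeff a n) by
    rw [e]
    exact (hasSum_nat_add_iff' 1).1 (by rwa [add_sub_cancel_right])
  have hconst : a • (1 : A) = a • (1 - a • q) * (1 - a • q)⁻¹ := by
    rw [smul_mul_assoc, mul_inv_cancel₀ (one_sub_ne_zero_of_norm_lt_one h)]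
  rw [Finset.sum_range_one, pow_zero, one_mul, mobiusCoeff, Algebra.algebraMap_eq_smul_one]
  conv_rhs => rw [hconst, ← add_mul]
  congr 1
  module

theorem Quaternion.norm_mobius_le_one {a : ℝ} (ha : |a| < 1) {q : ℍ} (hq : ‖q‖ ≤ 1) :
    ‖(algebraMap ℝ ℍ a - q) * (1 - a • q)⁻¹‖ ≤ 1 := by
  have hne := one_sub_ne_zero_of_norm_lt_one (norm_smul_lt_one_of_abs_lt_one ha hq)
  rw [norm_mul, norm_inv, ← div_eq_mul_inv, div_le_one (norm_pos_iff.2 hne),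
    Algebra.algebraMap_eq_smul_one]
  exact norm_smul_sub_le_norm_sub_smul norm_one hq ha.le

theorem hasSum_abs_mobiusCoeff_mul_pow {a r : ℝ} (ha0 : 0 ≤ a) (ha1 : a ≤ 1) (har : |a * r| < 1) :
    HasSum (fun n => |mobiusCoeff a n| * r ^ n) (mobiusBohrSum a r) := by
  have hshift : HasSum (fun n => |mobiusCoeff a (n + 1)| * r ^ (n + 1))
      ((1 - a ^ 2) * r / (1 - a * r)) := by
    have hterm : ∀ n, |mobiusCoeff a (n + 1)| * r ^ (n + 1) = (1 - a ^ 2) * r * (a * r) ^ n := by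
      intro n
      rw [mobiusCoeff, abs_neg, abs_of_nonneg (by have := pow_le_one₀ ha0 ha1 (n := 2); positivity)]
      ring
    simpa only [hterm, div_eq_mul_inv] using (hasSum_geometric_of_abs_lt_one har).mul_left _
  refine (hasSum_nat_add_iff' 1).1 ?_
  rwa [Finset.sum_range_one, mobiusCoeff, abs_of_nonneg ha0, pow_zero, mul_one, mobiusBohrSum,
    add_sub_cancel_left]

theorem hasSum_norm_pow_mul_mobiusCoeff {A : Type*} [NormedDivisionRing A] [NormedAlgebra ℝ A]
    {a : ℝ} (ha0 : 0 ≤ a) (ha1 : a ≤ 1) {q : A} (h : ‖a • q‖ < 1) :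
    HasSum (fun n => ‖q ^ n * algebraMap ℝ A (mobiusCoeff a n)‖) (mobiusBohrSum a ‖q‖) := by
  rw [norm_smul, Real.norm_eq_abs, ← abs_norm q, ← abs_mul] at h
  simpa only [norm_mul, norm_pow, norm_algebraMap', Real.norm_eq_abs, mul_comm (‖q‖ ^ _)] using
    hasSum_abs_mobiusCoeff_mul_pow ha0 ha1 h

theorem one_lt_mobiusBohrSum {a r : ℝ} (ha : a < 1) (har : a * r < 1) (h : 1 < r * (1 + 2 * a)) :
    1 < mobiusBohrSum a r := by
  have hden : 0 < 1 - a * r := by linarith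
  have key : mobiusBohrSum a r - 1 = (1 - a) * (r * (1 + 2 * a) - 1) / (1 - a * r) := by
    rw [mobiusBohrSum]
    field_simp
    ring
  have : 0 < (1 - a) * (r * (1 + 2 * a) - 1) / (1 - a * r) :=
    div_pos (mul_pos (by linarith) (by linarith)) hden
  linarith

theorem exists_one_lt_mobiusBohrSum {r : ℝ} (h3 : 1 / 3 < r) (h1 : r < 1) :
    ∃ a, 0 ≤ a ∧ a < 1 ∧ 1 < mobiusBohrSum a r := by
  have hr : 0 < r := by linarith
  obtain ⟨a, hlo, hhi⟩ := exists_between (show (1 - r) / (2 * r) < 1 by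
    rw [div_lt_one (by positivity)]; linarith)
  have ha0 : 0 ≤ a := le_trans (div_nonneg (by linarith) (by positivity)) hlo.le
  refine ⟨a, ha0, hhi, one_lt_mobiusBohrSum hhi (by nlinarith) ?_⟩
  rw [div_lt_iff₀ (by positivity)] at hlo
  linarith

/-- Sharpness of the Bohr radius `1/3`: for every point of the open unit ball of
norm greater than `1/3` there is a power series satisfying the Bohr hypotheses
whose Bohr sum at that point exceeds `1`. -/
theorem bohr_radius_sharp :
    ∀ q₀ : ℍ, 1 / 3 < ‖q₀‖ → ‖q₀‖ < 1 →
      ∃ b : ℕ → ℍ,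
        Summable (fun n => ‖b n‖) ∧
        (∀ q : ℍ, ‖q‖ ≤ 1 → ‖∑' n, q ^ n * b n‖ < 1) ∧
        1 < ∑' n, ‖q₀ ^ n * b n‖ := by
  intro q₀ h3 h1
  obtain ⟨a, ha0, ha1, hS⟩ := exists_one_lt_mobiusBohrSum h3 h1
  obtain ⟨t, hSt, ht1⟩ := exists_between (inv_lt_one_of_one_lt₀ hS)
  have ht0 : 0 < t := (inv_pos.2 (by linarith)).trans hSt
  have haa : |a| < 1 := abs_lt.2 ⟨by linarith, ha1⟩
  have hball : ∀ q : ℍ, ‖q‖ ≤ 1 → ‖a • q‖ < 1 := fun q hq => norm_smul_lt_one_of_abs_lt_one haa hq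
  refine ⟨fun n => t • algebraMap ℝ ℍ (mobiusCoeff a n), ?_, fun q hq => ?_, ?_⟩
  · simpa [norm_smul, abs_of_pos ht0] using
      ((hasSum_norm_pow_mul_mobiusCoeff ha0 ha1.le (hball 1 norm_one.le)).summable.mul_left t)
  · simp_rw [mul_smul_comm]
    rw [((hasSum_pow_mul_mobiusCoeff (hball q hq)).const_smul t).tsum_eq, norm_smul,
      Real.norm_eq_abs, abs_of_pos ht0]
    calc t * _ ≤ t * 1 := mul_le_mul_of_nonneg_left (Quaternion.norm_mobius_le_one haa hq) ht0.le
      _ < 1 := by rwa [mul_one]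
  · simp_rw [mul_smul_comm, norm_smul, Real.norm_eq_abs, abs_of_pos ht0]
    rw [((hasSum_norm_pow_mul_mobiusCoeff ha0 ha1.le (hball q₀ h1.le)).mul_left t).tsum_eq]
    exact (inv_lt_iff_one_lt_mul₀ (by linarith)).1 hSt
end

section
/- Let a be a real number with 0 < a < 1. Then for every quaternion q with ‖q‖ ≤ 1 one has 1 − q·(a : ℍ) ≠ 0 and ‖(1 − q·(a : ℍ))⁻¹ · (1 − q)‖ ≤ 2/(1 + a); moreover at q = −1 equality holds, i.e. ‖(1 + (a : ℍ))⁻¹ · (1 − (−1 : ℍ))‖ = 2/(1 + a). In particular the maximum of ‖(1 − q·a)⁻¹·(1 − q)‖ over the closed unit ball equals 2/(1 + a). -/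
/-!
Since `a` is real, `q * a = a • q`, so only the real inner product structure of `ℍ` matters.
With `x = ⟪1, q⟫ = Re q ≥ -1` and `r = ‖q‖² ≤ 1`,
`4‖1 - a q‖² - (1 + a)²‖1 - q‖² = (1 - a) (2 (1 - a) (1 + x) + (3a + 1) (1 - r)) ≥ 0`,
while `‖1 - a q‖ ≥ 1 - a > 0`. At `q = -1` everything is real and the bound is attained.
-/

local notation "ℍ" => Quaternion ℝ

theorem one_add_mul_norm_sub_le_two_mul_norm_sub_smul {E : Type*} [NormedAddCommGroup E]
    [InnerProductSpace ℝ E] {u v : E} (hu : ‖u‖ = 1) (hv : ‖v‖ ≤ 1) {a : ℝ}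
    (ha0 : 0 ≤ a) (ha1 : a ≤ 1) :
    (1 + a) * ‖u - v‖ ≤ 2 * ‖u - a • v‖ := by
  have hinner : -1 ≤ inner ℝ u v := by
    have := (abs_le.1 (abs_real_inner_le_norm u v)).1
    rw [hu, one_mul] at this
    linarith
  have hsq : ((1 + a) * ‖u - v‖) ^ 2 ≤ (2 * ‖u - a • v‖) ^ 2 := by
    rw [mul_pow, mul_pow, norm_sub_sq_real, norm_sub_sq_real, inner_smul_right, norm_smul,
      Real.norm_of_nonneg ha0, hu]
    nlinarith [mul_nonneg (mul_nonneg (sub_nonneg.2 ha1) (sub_nonneg.2 ha1))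
        (by linarith : 0 ≤ 1 + inner ℝ u v),
      mul_nonneg (mul_nonneg (sub_nonneg.2 ha1) (by linarith : (0 : ℝ) ≤ 3 * a + 1))
        (sub_nonneg.2 (pow_le_one₀ (n := 2) (norm_nonneg v) hv))]
  exact (pow_le_pow_iff_left₀ (by positivity) (by positivity) two_ne_zero).1 hsq

/-- The modulus of the fractional transformation `φ(q) = (1 - q·a)⁻¹·(1 - q)` is at
most `2/(1+a)` on the closed unit ball, with equality at `q = -1`. -/
theorem phi_max_modulus
    (a : ℝ) (ha0 : 0 < a) (ha1 : a < 1) :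
    (∀ q : ℍ, ‖q‖ ≤ 1 →
        1 - q * (a : ℍ) ≠ 0 ∧
        ‖(1 - q * (a : ℍ))⁻¹ * (1 - q)‖ ≤ 2 / (1 + a)) ∧
      ‖(1 - (-1 : ℍ) * (a : ℍ))⁻¹ * (1 - (-1 : ℍ))‖ = 2 / (1 + a) := by
  have hpos : 0 < 1 + a := by linarith
  refine ⟨fun q hq => ?_, ?_⟩
  · rw [← Quaternion.coe_commutes, Quaternion.coe_mul_eq_smul]
    have hden : 1 - a ≤ ‖1 - a • q‖ := by
      have := norm_sub_norm_le (1 : ℍ) (a • q)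
      rw [norm_one, norm_smul, Real.norm_of_nonneg ha0.le] at this
      nlinarith
    have hden_pos : 0 < ‖1 - a • q‖ := by linarith
    refine ⟨norm_pos_iff.1 hden_pos, ?_⟩
    rw [norm_mul, norm_inv, inv_mul_le_iff₀ hden_pos, mul_div_assoc', le_div_iff₀ hpos]
    linarith [one_add_mul_norm_sub_le_two_mul_norm_sub_smul norm_one hq ha0.le ha1.le]
  · have hden : (1 : ℍ) - -1 * a = ((1 + a : ℝ) : ℍ) := by
      rw [neg_one_mul, sub_neg_eq_add]; norm_cast
    have hnum : (1 : ℍ) - -1 = ((2 : ℝ) : ℍ) := by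
      rw [sub_neg_eq_add, one_add_one_eq_two]; norm_cast
    rw [hden, hnum, norm_mul, norm_inv, Quaternion.norm_coe, Quaternion.norm_coe,
      Real.norm_of_nonneg hpos.le, Real.norm_two, inv_mul_eq_div]
end

section
/- Let a be a real number with 0 < a < 1, and define b : ℕ → ℝ by b 0 = 1 and b n = (a − 1)·a^(n−1) for n ≥ 1. Then for every quaternion q with ‖q‖ ≤ 1: (i) the family (fun n => qⁿ · (b n : ℍ)) is summable with sum (1 − q·(a : ℍ))⁻¹ · (1 − q); and (ii) ∑' n, ‖qⁿ · (b n : ℍ)‖ = 1 + ‖q‖·(1 − a)/(1 − ‖q‖·a). -/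
local notation "ℍ" => Quaternion ℝ

/-- Power series expansion of `φ(q) = (1 - q·a)⁻¹·(1 - q)` and the sum of the moduli
of its terms. -/
theorem phi_power_series
    (a : ℝ) (ha0 : 0 < a) (ha1 : a < 1)
    (b : ℕ → ℝ)
    (hb0 : b 0 = 1)
    (hbn : ∀ n : ℕ, 1 ≤ n → b n = (a - 1) * a ^ (n - 1)) :
    ∀ q : ℍ, ‖q‖ ≤ 1 →
      HasSum (fun n => q ^ n * ((b n : ℝ) : ℍ)) ((1 - q * (a : ℍ))⁻¹ * (1 - q)) ∧
      ∑' n, ‖q ^ n * ((b n : ℝ) : ℍ)‖ = 1 + ‖q‖ * (1 - a) / (1 - ‖q‖ * a) := by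
  intro q hq
  set x : ℍ := q * (a : ℍ) with hx
  have hnx : ‖x‖ = ‖q‖ * a := by
    rw [hx, norm_mul, Quaternion.norm_coe, Real.norm_eq_abs, abs_of_pos ha0]
  have hqa1 : ‖q‖ * a < 1 := by
    calc ‖q‖ * a ≤ 1 * a := by gcongr
    _ < 1 := by linarith
  have hxlt : ‖x‖ < 1 := by rw [hnx]; exact hqa1
  -- geometric series in ℍ
  have hsum : Summable (fun n : ℕ => x ^ n) := summable_geometric_of_norm_lt_one hxlt
  have hx0 : (1 - x) ≠ 0 := by
    intro h
    have h1 : (1 : ℍ) = x := sub_eq_zero.mp h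
    rw [← h1, norm_one] at hxlt
    exact lt_irrefl _ hxlt
  have htsum : (∑' n : ℕ, x ^ n) = (1 - x)⁻¹ :=
    eq_inv_of_mul_eq_one_left (geom_series_mul_neg x hxlt)
  have hgeo : HasSum (fun n : ℕ => x ^ n) (1 - x)⁻¹ := htsum ▸ hsum.hasSum
  have hcomm : Commute q ((a : ℝ) : ℍ) := (Quaternion.coe_commute a q).symm
  -- the shifted series
  have hterm : ∀ n : ℕ, q ^ (n + 1) * ((b (n + 1) : ℝ) : ℍ)
      = (q * (((a - 1 : ℝ)) : ℍ)) * x ^ n := by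
    intro n
    rw [hbn (n + 1) (Nat.le_add_left 1 n), Nat.add_sub_cancel]
    push_cast
    rw [hx, hcomm.mul_pow, pow_succ']
    rw [mul_assoc q (q ^ n), mul_assoc q]
    congr 1
    have h : Commute (q ^ n) (((a : ℝ) : ℍ) - 1) :=
      ((Quaternion.coe_commute a (q ^ n)).symm.sub_right (Commute.one_right _))
    rw [← mul_assoc, h.eq, mul_assoc]
  have hshift : HasSum (fun n : ℕ => q ^ (n + 1) * ((b (n + 1) : ℝ) : ℍ))
      ((q * (((a - 1 : ℝ)) : ℍ)) * (1 - x)⁻¹) := by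
    simpa only [hterm] using hgeo.mul_left (q * (((a - 1 : ℝ)) : ℍ))
  have hfull : HasSum (fun n : ℕ => q ^ n * ((b n : ℝ) : ℍ))
      ((q * (((a - 1 : ℝ)) : ℍ)) * (1 - x)⁻¹ + 1) := by
    refine (hasSum_nat_add_iff' (f := fun n => q ^ n * ((b n : ℝ) : ℍ)) 1).mp ?_
    simpa [hb0] using hshift
  -- identify the sum with (1 - x)⁻¹ * (1 - q)
  have hval : (q * (((a - 1 : ℝ)) : ℍ)) * (1 - x)⁻¹ + 1 = (1 - x)⁻¹ * (1 - q) := by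
    have hcq : Commute q (1 - x) := by
      rw [hx]
      exact (Commute.one_right q).sub_right ((Commute.refl q).mul_right hcomm)
    apply mul_left_cancel₀ hx0
    have h1 : (1 - x) * ((q * (((a - 1 : ℝ)) : ℍ)) * (1 - x)⁻¹)
        = q * (((a - 1 : ℝ)) : ℍ) := by
      have hc : Commute (1 - x) (q * (((a - 1 : ℝ)) : ℍ)) :=
        (hcq.symm.mul_right ((Quaternion.coe_commute (a - 1) (1 - x))).symm)
      rw [← mul_assoc, hc.eq, mul_assoc, mul_inv_cancel₀ hx0, mul_one]
    rw [mul_add, mul_one, h1, ← mul_assoc, mul_inv_cancel₀ hx0, one_mul, hx]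
    push_cast
    noncomm_ring
  constructor
  · rw [← hval]; exact hfull
  · -- norms
    have hnterm : ∀ n : ℕ, ‖q ^ n * ((b n : ℝ) : ℍ)‖ = ‖q‖ ^ n * |b n| := by
      intro n
      rw [norm_mul, norm_pow, Quaternion.norm_coe, Real.norm_eq_abs]
    have hb : ∀ n : ℕ, ‖q‖ ^ (n + 1) * |b (n + 1)| = (‖q‖ * (1 - a)) * (‖q‖ * a) ^ n := by
      intro n
      rw [hbn (n + 1) (Nat.le_add_left 1 n), Nat.add_sub_cancel, abs_mul,
        abs_of_neg (by linarith), abs_of_pos (pow_pos ha0 n)]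
      ring
    have hgeoR : HasSum (fun n : ℕ => (‖q‖ * (1 - a)) * (‖q‖ * a) ^ n)
        ((‖q‖ * (1 - a)) * (1 - ‖q‖ * a)⁻¹) :=
      (hasSum_geometric_of_lt_one (by positivity) hqa1).mul_left _
    have hfullR : HasSum (fun n : ℕ => ‖q‖ ^ n * |b n|)
        ((‖q‖ * (1 - a)) * (1 - ‖q‖ * a)⁻¹ + 1) := by
      refine (hasSum_nat_add_iff' (f := fun n => ‖q‖ ^ n * |b n|) 1).mp ?_
      simpa [hb0, hb] using hgeoR
    have : (∑' n : ℕ, ‖q ^ n * ((b n : ℝ) : ℍ)‖) = (‖q‖ * (1 - a)) * (1 - ‖q‖ * a)⁻¹ + 1 := by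
      simpa only [hnterm] using hfullR.tsum_eq
    rw [this, div_eq_mul_inv]
    ring
end

section
/- Let a be a real number with 0 < a < 1, and define b : ℕ → ℝ by b 0 = 1 and b n = (a − 1)·a^(n−1) for n ≥ 1. Then for every quaternion q with 1/(1 + 2a) < ‖q‖ ≤ 1 one has ∑' n, ‖qⁿ · (b n : ℍ)‖ > 2/(1 + a); that is, the sum of the moduli of the terms of the power series of φ(q) = (1 − q·a)⁻¹·(1 − q) at q strictly exceeds the maximum modulus of φ on the closed unit ball. -/
local notation "ℍ" => Quaternion ℝ

/-- For `‖q‖ > 1/(1+2a)` the sum of the moduli of the power series terms of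
`φ(q) = (1 - q·a)⁻¹·(1 - q)` strictly exceeds `2/(1+a)`, the maximum modulus of `φ`
on the closed unit ball. -/
theorem phi_bohr_sum_exceeds_max
    (a : ℝ) (ha0 : 0 < a) (ha1 : a < 1)
    (b : ℕ → ℝ)
    (hb0 : b 0 = 1)
    (hbn : ∀ n : ℕ, 1 ≤ n → b n = (a - 1) * a ^ (n - 1)) :
    ∀ q : ℍ, 1 / (1 + 2 * a) < ‖q‖ → ‖q‖ ≤ 1 →
      2 / (1 + a) < ∑' n, ‖q ^ n * ((b n : ℝ) : ℍ)‖ := by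
  intro q hq1 hq2
  set r := ‖q‖ with hrdef
  have h2a : (0:ℝ) < 1 + 2 * a := by linarith
  have hr0 : 0 < r := lt_trans (by positivity) hq1
  have har : a * r < 1 := by nlinarith
  have harnn : (0:ℝ) ≤ a * r := by positivity
  have h1ar : 0 < 1 - a * r := by linarith
  have hpa : (0:ℝ) < 1 + a := by linarith
  have hterm : ∀ n : ℕ, ‖q ^ n * ((b n : ℝ) : ℍ)‖ = r ^ n * |b n| := by
    intro n
    rw [norm_mul, norm_pow, Quaternion.norm_coe, Real.norm_eq_abs]
  have hshift : ∀ n : ℕ, ‖q ^ (n + 1) * ((b (n + 1) : ℝ) : ℍ)‖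
      = (1 - a) * r * (a * r) ^ n := by
    intro n
    rw [hterm, hbn (n + 1) (Nat.le_add_left 1 n)]
    simp only [Nat.add_sub_cancel]
    rw [abs_mul, abs_of_nonpos (by linarith : a - 1 ≤ 0),
      abs_of_nonneg (by positivity : (0:ℝ) ≤ a ^ n)]
    rw [pow_succ, mul_pow]
    ring
  have hgeo : Summable (fun n : ℕ => (1 - a) * r * (a * r) ^ n) :=
    (summable_geometric_of_lt_one harnn har).mul_left _
  have hs : Summable (fun n : ℕ => ‖q ^ n * ((b n : ℝ) : ℍ)‖) := by
    apply (summable_nat_add_iff 1).mp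
    refine hgeo.congr fun n => ?_
    exact (hshift n).symm
  rw [Summable.tsum_eq_zero_add hs]
  have h0 : ‖q ^ 0 * ((b 0 : ℝ) : ℍ)‖ = 1 := by
    rw [hterm, hb0]; simp
  have htail : ∑' n : ℕ, ‖q ^ (n + 1) * ((b (n + 1) : ℝ) : ℍ)‖
      = (1 - a) * r * (1 - a * r)⁻¹ := by
    rw [tsum_congr hshift, tsum_mul_left, tsum_geometric_of_lt_one harnn har]
  rw [h0, htail]
  have hr' : 1 < r * (1 + 2 * a) := (div_lt_iff₀ h2a).mp hq1
  rw [← sub_pos]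
  have h : 1 + (1 - a) * r * (1 - a * r)⁻¹ - 2 / (1 + a)
      = ((1 - a) * (r * (1 + 2 * a) - 1)) / ((1 - a * r) * (1 + a)) := by
    field_simp
    ring
  rw [h]
  apply div_pos
  · nlinarith
  · positivity
end
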